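/- arXiv:0806.4156 — 9 statements merged into one kernel-verified Lean document; each statement's English description precedes it below -/
import Mathlib

section
/- Let R be an s-unital ring and a ∈ R. Then (i) the set K(a) = { x ∈ R : a ⊕ x ≼ a } is a two-sided ideal of R, and (ii) every x ∈ K(a) satisfies x ≼ a, i.e. x = αaβ for some α, β ∈ R (in particular K(a) is contained in the ideal RaR of finite sums Σ xᵢayᵢ). -/
/-- `x ≼ y` for square matrices over a (possibly nonunital) ring: `x = α * y * β`
for some rectangular matrices `α`, `β`. -/
def MatSub {R : Type*} [NonUnitalRing R] {k n : ℕ}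
    (x : Matrix (Fin k) (Fin k) R) (y : Matrix (Fin n) (Fin n) R) : Prop :=
  ∃ (α : Matrix (Fin k) (Fin n) R) (β : Matrix (Fin n) (Fin k) R), x = α * y * β

/-- `a ⊕ b ≼ c` for ring elements: the block-diagonal matrix `diag(a, b)` satisfies
`diag(a,b) ≼ (c)` as square matrices. -/
def PairSub {R : Type*} [NonUnitalRing R] (a b c : R) : Prop :=
  MatSub !![a, 0; 0, b] !![c]

/-- `a ≼ b` for ring elements: `a = α * b * β` for some ring elements. -/
def ElemSub {R : Type*} [NonUnitalRing R] (a b : R) : Prop :=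
  ∃ α β : R, a = α * b * β

/-- `K(a) = { x | a ⊕ x ≼ a }`. -/
def KSet {R : Type*} [NonUnitalRing R] (a : R) : Set R := { x | PairSub a x a }

/-- An element `a` is infinite if `a ⊕ x ≼ a` for some nonzero `x`, i.e. `K(a) ≠ 0`. -/
def IsInfiniteElem {R : Type*} [NonUnitalRing R] (a : R) : Prop :=
  ∃ x : R, x ≠ 0 ∧ PairSub a x a

/-- An element `a` is properly infinite if `a ≠ 0` and `a ⊕ a ≼ a`. -/
def IsProperlyInfiniteElem {R : Type*} [NonUnitalRing R] (a : R) : Prop :=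
  a ≠ 0 ∧ PairSub a a a

/-- A ring is s-unital if each element `x` admits `u, v` with `u * x = x` and `x * v = x`. -/
def IsSUnitalRing (R : Type*) [NonUnitalRing R] : Prop :=
  ∀ x : R, (∃ u : R, u * x = x) ∧ (∃ v : R, x * v = x)

/-- `b` belongs to `RaR`, the set of finite sums `Σ xᵢ * a * yᵢ`. -/
def MemRaR {R : Type*} [NonUnitalRing R] (a b : R) : Prop :=
  ∃ (n : ℕ) (x y : Fin n → R), b = ∑ i, x i * a * y i

/-- A (possibly nonunital) ring is a division ring: it has a nonzero multiplicative identity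
with respect to which every nonzero element is two-sided invertible. -/
def IsDivisionRingPred (R : Type*) [NonUnitalRing R] : Prop :=
  ∃ u : R, u ≠ 0 ∧ (∀ x : R, u * x = x ∧ x * u = x) ∧
    ∀ x : R, x ≠ 0 → ∃ y : R, x * y = u ∧ y * x = u

/-- A ring `R` is purely infinite if no quotient of `R` by a two-sided ideal is a division
ring, and `b ∈ RaR` implies `b = x * a * y` for some `x, y ∈ R`. -/
def IsPurelyInfiniteRing (R : Type*) [NonUnitalRing R] : Prop :=
  (∀ I : TwoSidedIdeal R, ¬ IsDivisionRingPred I.ringCon.Quotient) ∧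
  ∀ a b : R, MemRaR a b → ElemSub b a

/-- A ring is properly purely infinite if every nonzero element is properly infinite. -/
def IsProperlyPurelyInfiniteRing (R : Type*) [NonUnitalRing R] : Prop :=
  ∀ a : R, a ≠ 0 → IsProperlyInfiniteElem a

/-- An idempotent `e` is infinite if `e ∼ f ≤ e` for some idempotent `f ≠ e`. -/
def IsInfiniteIdem {R : Type*} [NonUnitalRing R] (e : R) : Prop :=
  IsIdempotentElem e ∧ ∃ f : R, IsIdempotentElem f ∧ (∃ x y : R, e = x * y ∧ f = y * x) ∧
    e * f = f ∧ f * e = f ∧ f ≠ e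

/-- An exchange ring: for each `x` there are an idempotent `e` and elements `r, s` with
`e = x * r = x + s - x * s`. -/
def IsExchangeRing (R : Type*) [NonUnitalRing R] : Prop :=
  ∀ x : R, ∃ e r s : R, IsIdempotentElem e ∧ e = x * r ∧ e = x + s - x * s

/-- A ring has local units if every finite subset is contained in a corner `eRe`
for some idempotent `e`. -/
def HasLocalUnits (R : Type*) [NonUnitalRing R] : Prop :=
  ∀ s : Finset R, ∃ e : R, IsIdempotentElem e ∧ ∀ x ∈ s, ∃ r : R, x = e * r * e

lemma pairSub_iff' {R : Type*} [NonUnitalRing R] (a x : R) :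
    PairSub a x a ↔ ∃ p q c d : R,
      a = p * a * c ∧ p * a * d = 0 ∧ q * a * c = 0 ∧ x = q * a * d := by
  constructor
  · rintro ⟨α, β, h⟩
    refine ⟨α 0 0, α 1 0, β 0 0, β 0 1, ?_, ?_, ?_, ?_⟩
    · have := congrFun (congrFun h 0) 0
      simpa [Matrix.mul_apply, Fin.sum_univ_succ] using this
    · have := congrFun (congrFun h 0) 1
      simpa [Matrix.mul_apply, Fin.sum_univ_succ, eq_comm] using this
    · have := congrFun (congrFun h 1) 0
      simpa [Matrix.mul_apply, Fin.sum_univ_succ, eq_comm] using this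
    · have := congrFun (congrFun h 1) 1
      simpa [Matrix.mul_apply, Fin.sum_univ_succ] using this
  · rintro ⟨p, q, c, d, h1, h2, h3, h4⟩
    refine ⟨!![p; q], !![c, d], ?_⟩
    ext i j
    fin_cases i <;> fin_cases j <;>
      simp [Matrix.mul_apply, Fin.sum_univ_succ, h1.symm, h2, h3, h4.symm]

/-- Lemma 2.5 (Kisideal): for an s-unital ring `R` and `a ∈ R`, the set
`K(a) = { x | a ⊕ x ≼ a }` is a two-sided ideal of `R`, and every `x ∈ K(a)` satisfies
`x ≼ a` (in particular `K(a) ⊆ RaR`). -/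
theorem KSet_isTwoSidedIdeal_and_subset_RaR {R : Type*} [NonUnitalRing R]
    (hR : IsSUnitalRing R) (a : R) :
    ((0 : R) ∈ KSet a) ∧
    (∀ x ∈ KSet a, ∀ y ∈ KSet a, x + y ∈ KSet a) ∧
    (∀ x ∈ KSet a, -x ∈ KSet a) ∧
    (∀ x ∈ KSet a, ∀ r : R, r * x ∈ KSet a ∧ x * r ∈ KSet a) ∧
    (∀ x ∈ KSet a, ElemSub x a ∧ MemRaR a x) := by
  obtain ⟨⟨u, hu⟩, ⟨v, hv⟩⟩ := hR a
  have h0 : (0 : R) ∈ KSet a := by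
    rw [KSet, Set.mem_setOf_eq, pairSub_iff']
    exact ⟨u, 0, v, 0, by rw [hu, hv], by simp, by simp, by simp⟩
  refine ⟨h0, ?_, ?_, ?_, ?_⟩
  · intro x hx y hy
    rw [KSet, Set.mem_setOf_eq, pairSub_iff'] at hx hy ⊢
    obtain ⟨p, q, c, d, h1, h2, h3, h4⟩ := hx
    obtain ⟨p', q', c', d', h1', h2', h3', h4'⟩ := hy
    refine ⟨p * p', q * p' + q', c' * c, c' * d + d', ?_, ?_, ?_, ?_⟩
    · have e : p * p' * a * (c' * c) = p * (p' * a * c') * c := by noncomm_ring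
      rw [e, ← h1', ← h1]
    · have e : p * p' * a * (c' * d + d') = p * (p' * a * c') * d + p * (p' * a * d') := by
        noncomm_ring
      rw [e, ← h1', h2, h2', mul_zero, add_zero]
    · have e : (q * p' + q') * a * (c' * c) = q * (p' * a * c') * c + q' * a * c' * c := by
        noncomm_ring
      rw [e, ← h1', h3, h3', zero_mul, add_zero]
    · have e : (q * p' + q') * a * (c' * d + d') =
          q * (p' * a * c') * d + q * (p' * a * d') + (q' * a * c' * d + q' * a * d') := by
        noncomm_ring
      rw [e, ← h1', h2', h3', mul_zero, zero_mul, add_zero, zero_add, ← h4, ← h4']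
  · intro x hx
    rw [KSet, Set.mem_setOf_eq, pairSub_iff'] at hx ⊢
    obtain ⟨p, q, c, d, h1, h2, h3, h4⟩ := hx
    exact ⟨p, -q, c, d, h1, h2, by rw [neg_mul, neg_mul, h3, neg_zero],
      by rw [h4, neg_mul, neg_mul]⟩
  · intro x hx r
    rw [KSet, Set.mem_setOf_eq, pairSub_iff'] at hx
    obtain ⟨p, q, c, d, h1, h2, h3, h4⟩ := hx
    constructor
    · rw [KSet, Set.mem_setOf_eq, pairSub_iff']
      exact ⟨p, r * q, c, d, h1, h2, by rw [mul_assoc r, mul_assoc r, h3, mul_zero],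
        by rw [h4, mul_assoc r, mul_assoc r]⟩
    · rw [KSet, Set.mem_setOf_eq, pairSub_iff']
      exact ⟨p, q, c, d * r, h1, by rw [← mul_assoc, h2, zero_mul],
        h3, by rw [h4]; noncomm_ring⟩
  · intro x hx
    rw [KSet, Set.mem_setOf_eq, pairSub_iff'] at hx
    obtain ⟨p, q, c, d, h1, h2, h3, h4⟩ := hx
    exact ⟨⟨q, d, h4⟩, 1, fun _ => q, fun _ => d, by simpa using h4⟩
end

section
/- Let R be an s-unital ring. If a ∈ R is properly infinite and b ∈ RaR (i.e. b is a finite sum Σᵢ xᵢayᵢ with xᵢ,yᵢ ∈ R), then b ≼ a, i.e. there exist x, y ∈ R with b = xay. -/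
/-- From `PairSub a a a` we extract four elements with orthogonality relations. -/
lemma pairSub_extract {R : Type*} [NonUnitalRing R] {a : R} (h : PairSub a a a) :
    ∃ s₁ s₂ t₁ t₂ : R, s₁ * a * t₁ = a ∧ s₂ * a * t₂ = a ∧
      s₁ * a * t₂ = 0 ∧ s₂ * a * t₁ = 0 := by
  obtain ⟨α, β, hab⟩ := h
  refine ⟨α 0 0, α 1 0, β 0 0, β 0 1, ?_, ?_, ?_, ?_⟩
  · have := congrFun (congrFun hab 0) 0
    simpa [Matrix.mul_apply, Fin.sum_univ_succ] using this.symm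
  · have := congrFun (congrFun hab 1) 1
    simpa [Matrix.mul_apply, Fin.sum_univ_succ] using this.symm
  · have := congrFun (congrFun hab 0) 1
    simpa [Matrix.mul_apply, Fin.sum_univ_succ] using this.symm
  · have := congrFun (congrFun hab 1) 0
    simpa [Matrix.mul_apply, Fin.sum_univ_succ] using this.symm

/-- Orthogonal families of arbitrary length from proper infiniteness. -/
lemma orth_family {R : Type*} [NonUnitalRing R] {a : R} (h : PairSub a a a) :
    ∀ n : ℕ, ∃ s t : Fin n → R, ∀ i j, s i * a * t j = if i = j then a else 0 := by
  obtain ⟨s₁, s₂, t₁, t₂, h11, h22, h12, h21⟩ := pairSub_extract h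
  intro n
  induction n with
  | zero => exact ⟨Fin.elim0, Fin.elim0, fun i => i.elim0⟩
  | succ n ih =>
    obtain ⟨s, t, hst⟩ := ih
    refine ⟨Fin.cons s₂ (fun i => s i * s₁), Fin.cons t₂ (fun j => t₁ * t j), ?_⟩
    intro i j
    refine Fin.cases ?_ (fun i => ?_) i <;> refine Fin.cases ?_ (fun j => ?_) j
    · simpa using h22
    · have : s₂ * a * (t₁ * t j) = (s₂ * a * t₁) * t j := by simp only [mul_assoc]
      simp [this, h21, (Fin.succ_ne_zero j).symm]
    · have : s i * s₁ * a * t₂ = s i * (s₁ * a * t₂) := by simp only [mul_assoc]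
      simp [this, h12, Fin.succ_ne_zero i]
    · have : s i * s₁ * a * (t₁ * t j) = s i * (s₁ * a * t₁) * t j := by simp only [mul_assoc]
      have h2 : s i * (s₁ * a * t₁) * t j = s i * a * t j := by rw [h11]
      simp only [Fin.cons_succ, this, h2, hst i j]
      by_cases hij : i = j <;> simp [hij, Fin.succ_inj]

/-- Proposition 2.10 (findtheproduct): in an s-unital ring, if `a` is properly infinite and
`b ∈ RaR`, then `b ≼ a`, i.e. `b = x * a * y` for some `x, y ∈ R`. -/
theorem elemSub_of_properlyInfinite_of_memRaR {R : Type*} [NonUnitalRing R]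
    (hR : IsSUnitalRing R) (a b : R)
    (ha : IsProperlyInfiniteElem a) (hb : MemRaR a b) :
    ElemSub b a := by
  obtain ⟨n, x, y, hbxy⟩ := hb
  obtain ⟨s, t, hst⟩ := orth_family ha.2 n
  refine ⟨∑ i, x i * s i, ∑ j, t j * y j, ?_⟩
  rw [hbxy, Finset.sum_mul, Finset.sum_mul]
  refine Finset.sum_congr rfl fun i _ => ?_
  rw [Finset.mul_sum]
  rw [Finset.sum_eq_single i]
  · have : x i * s i * a * (t i * y i) = x i * (s i * a * t i) * y i := by simp only [mul_assoc]
    rw [this, hst i i]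
    simp [mul_assoc]
  · intro j _ hji
    have : x i * s i * a * (t j * y j) = x i * (s i * a * t j) * y j := by simp only [mul_assoc]
    rw [this, hst i j, if_neg (Ne.symm hji)]
    simp
  · intro h; exact absurd (Finset.mem_univ i) h
end

section
/- Let R be an s-unital ring. Then: (i) if R is properly purely infinite, then R is purely infinite; (ii) if the 2×2 matrix ring M₂(R) is purely infinite, then R is properly purely infinite. -/
/-!
A witness of `a ⊕ a ≼ a` is a family with `sᵢ a tⱼ = δᵢⱼ a`, which merges two elements
`x a y`, `x' a y'` into `(x s₁ + x' s₂) a (t₁ y + t₂ y')`; hence every element of `RaR` has the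
form `x a y`. In a division ring, `s₁ a t₂ = 0` forces `t₂ = 0`, contradicting `s₂ a t₂ = a`, so
no quotient of a properly purely infinite ring is a division ring.

Conversely, if `u a = a = a v`, then `diag(a, a) = Σⱼ E_{j0}(u) · diag(a, 0) · E_{0j}(v)` lies in
the ideal of `M₂(R)` generated by `diag(a, 0)`; pure infiniteness of `M₂(R)` writes it as
`X · diag(a, 0) · Y`, and the first column of `X` and first row of `Y` witness `a ⊕ a ≼ a`.
-/

section PairSub

variable {R : Type*} [NonUnitalRing R]

lemma pairSub_iff {a b c : R} :
    PairSub a b c ↔ ∃ s₁ s₂ t₁ t₂ : R,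
      s₁ * c * t₁ = a ∧ s₁ * c * t₂ = 0 ∧ s₂ * c * t₁ = 0 ∧ s₂ * c * t₂ = b := by
  constructor
  · rintro ⟨α, β, h⟩
    have entry (i j : Fin 2) := (congrFun₂ h i j).symm
    simp only [Matrix.mul_apply, Fin.sum_univ_one] at entry
    exact ⟨α 0 0, α 1 0, β 0 0, β 0 1, by simpa using entry 0 0, by simpa using entry 0 1,
      by simpa using entry 1 0, by simpa using entry 1 1⟩
  · rintro ⟨s₁, s₂, t₁, t₂, h₁₁, h₁₂, h₂₁, h₂₂⟩
    refine ⟨!![s₁; s₂], !![t₁, t₂], ?_⟩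
    ext i j
    fin_cases i <;> fin_cases j <;> simp [Matrix.mul_apply, h₁₁, h₁₂, h₂₁, h₂₂]

lemma pairSub_zero : PairSub (0 : R) 0 0 :=
  pairSub_iff.2 ⟨0, 0, 0, 0, by simp⟩

lemma PairSub.map {S F : Type*} [NonUnitalRing S] [FunLike F R S] [NonUnitalRingHomClass F R S]
    (f : F) {a b c : R} (h : PairSub a b c) : PairSub (f a) (f b) (f c) := by
  obtain ⟨s₁, s₂, t₁, t₂, h₁₁, h₁₂, h₂₁, h₂₂⟩ := pairSub_iff.1 h
  refine pairSub_iff.2 ⟨f s₁, f s₂, f t₁, f t₂, ?_, ?_, ?_, ?_⟩ <;>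
    simp only [← map_mul, h₁₁, h₁₂, h₂₁, h₂₂, map_zero]

lemma ElemSub.add_of_pairSub_self {a b c : R} (ha : PairSub a a a) (hb : ElemSub b a)
    (hc : ElemSub c a) : ElemSub (b + c) a := by
  obtain ⟨s₁, s₂, t₁, t₂, h₁₁, h₁₂, h₂₁, h₂₂⟩ := pairSub_iff.1 ha
  obtain ⟨x, y, rfl⟩ := hb
  obtain ⟨x', y', rfl⟩ := hc
  refine ⟨x * s₁ + x' * s₂, t₁ * y + t₂ * y', ?_⟩
  have key : ∀ p q r w : R, p * q * a * (r * w) = p * (q * a * r) * w := fun _ _ _ _ => by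
    simp only [mul_assoc]
  simp only [add_mul, mul_add, key, h₁₁, h₁₂, h₂₁, h₂₂, mul_zero, zero_mul, add_zero, zero_add]

lemma elemSub_of_memRaR_of_pairSub_self {a b : R} (ha : PairSub a a a) (hb : MemRaR a b) :
    ElemSub b a := by
  obtain ⟨n, x, y, rfl⟩ := hb
  exact Finset.sum_induction _ (ElemSub · a) (fun _ _ => ElemSub.add_of_pairSub_self ha)
    ⟨0, 0, by simp⟩ fun i _ => ⟨x i, y i, rfl⟩

end PairSub

lemma IsDivisionRingPred.eq_zero_of_mul_eq_zero {S : Type*} [NonUnitalRing S]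
    (hS : IsDivisionRingPred S) {x y : S} (hx : x ≠ 0) (hxy : x * y = 0) : y = 0 := by
  obtain ⟨u, -, hu, hinv⟩ := hS
  obtain ⟨z, -, hzx⟩ := hinv x hx
  calc y = z * x * y := by rw [hzx, (hu y).1]
    _ = 0 := by rw [mul_assoc, hxy, mul_zero]

lemma IsDivisionRingPred.not_pairSub_self {S : Type*} [NonUnitalRing S]
    (hS : IsDivisionRingPred S) {a : S} (ha : a ≠ 0) : ¬ PairSub a a a := by
  intro h
  obtain ⟨s₁, s₂, t₁, t₂, h₁₁, h₁₂, -, h₂₂⟩ := pairSub_iff.1 h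
  have hs₁a : s₁ * a ≠ 0 := by
    rintro h0
    rw [h0, zero_mul] at h₁₁
    exact ha h₁₁.symm
  have ht₂ : t₂ = 0 := hS.eq_zero_of_mul_eq_zero hs₁a h₁₂
  rw [ht₂, mul_zero] at h₂₂
  exact ha h₂₂.symm

section ProperlyPurelyInfinite

variable {R : Type*} [NonUnitalRing R]

lemma IsProperlyPurelyInfiniteRing.pairSub_self (hR : IsProperlyPurelyInfiniteRing R) (a : R) :
    PairSub a a a := by
  obtain rfl | ha := eq_or_ne a 0
  · exact pairSub_zero
  · exact (hR a ha).2

lemma IsProperlyPurelyInfiniteRing.not_isDivisionRingPred_quotient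
    (hR : IsProperlyPurelyInfiniteRing R) (c : RingCon R) : ¬ IsDivisionRingPred c.Quotient := by
  intro hdiv
  obtain ⟨q, hq, -⟩ := id hdiv
  obtain ⟨a, rfl⟩ := Quotient.exists_rep q
  let π : R →ₙ+* c.Quotient :=
    { toFun := (↑), map_mul' := fun _ _ => rfl, map_zero' := rfl, map_add' := fun _ _ => rfl }
  exact hdiv.not_pairSub_self hq ((hR.pairSub_self a).map π)

theorem IsProperlyPurelyInfiniteRing.isPurelyInfiniteRing (hR : IsProperlyPurelyInfiniteRing R) :
    IsPurelyInfiniteRing R :=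
  ⟨fun I => hR.not_isDivisionRingPred_quotient I.ringCon,
    fun a _ => elemSub_of_memRaR_of_pairSub_self (hR.pairSub_self a)⟩

end ProperlyPurelyInfinite

section Matrix

variable {R : Type*} [NonUnitalRing R]

lemma memRaR_single_diagonal {n : ℕ} {a u v : R} (hu : u * a = a) (hv : a * v = a) (i : Fin n) :
    MemRaR (Matrix.single i i a) (Matrix.diagonal fun _ : Fin n => a) := by
  refine ⟨n, fun j => Matrix.single j i u, fun j => Matrix.single i j v, ?_⟩
  rw [← Matrix.sum_single_eq_diagonal]
  refine Finset.sum_congr rfl fun j _ => ?_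
  rw [Matrix.single_mul_single_same, Matrix.single_mul_single_same, hu, hv]

lemma matSub_of_eq_mul_single_mul {k n : ℕ} {x : Matrix (Fin k) (Fin k) R}
    {X : Matrix (Fin k) (Fin n) R} {Y : Matrix (Fin n) (Fin k) R} {i : Fin n} {a : R}
    (h : x = X * Matrix.single i i a * Y) : MatSub x !![a] := by
  refine ⟨Matrix.of fun r _ => X r i, Matrix.of fun _ c => Y i c, ?_⟩
  rw [h]
  ext r c
  simp [Matrix.mul_apply, Matrix.single_apply, ite_and]

theorem IsSUnitalRing.isProperlyPurelyInfiniteRing_of_matrix (hR : IsSUnitalRing R)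
    (hM : IsPurelyInfiniteRing (Matrix (Fin 2) (Fin 2) R)) : IsProperlyPurelyInfiniteRing R := by
  intro a ha
  obtain ⟨⟨u, hu⟩, ⟨v, hv⟩⟩ := hR a
  obtain ⟨X, Y, hXY⟩ := hM.2 _ _ (memRaR_single_diagonal hu hv 0)
  have hdiag : !![a, 0; 0, a] = Matrix.diagonal fun _ => a := by
    ext i j
    fin_cases i <;> fin_cases j <;> rfl
  refine ⟨ha, ?_⟩
  rw [PairSub, hdiag]
  exact matSub_of_eq_mul_single_mul hXY

end Matrix

/-- Lemma 3.4 (EveryPropInfImpliesPi): for an s-unital ring `R`: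
(i) if `R` is properly purely infinite, then it is purely infinite;
(ii) if `M₂(R)` is purely infinite, then `R` is properly purely infinite. -/
theorem properlyPurelyInfinite_implies_purelyInfinite_and_matrix_converse
    {R : Type*} [NonUnitalRing R] (hR : IsSUnitalRing R) :
    (IsProperlyPurelyInfiniteRing R → IsPurelyInfiniteRing R) ∧
    (IsPurelyInfiniteRing (Matrix (Fin 2) (Fin 2) R) → IsProperlyPurelyInfiniteRing R) :=
  ⟨IsProperlyPurelyInfiniteRing.isPurelyInfiniteRing, hR.isProperlyPurelyInfiniteRing_of_matrix⟩
end

section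
/- Let R be an s-unital ring and let a ∈ R and e ∈ R with e an idempotent satisfying e ≼ a. Then: (i) if f ∈ R is an idempotent with e ∼ f and f ≤ e, then e − f ∈ K(a); (ii) if e is a properly infinite idempotent, then e ∈ K(a); (iii) if e is an infinite idempotent, then a is an infinite element of R. -/
theorem pairSub_of {R : Type*} [NonUnitalRing R] {a b : R} (P C Q D : R)
    (h11 : P * (a * Q) = a) (h12 : P * (a * D) = 0)
    (h21 : C * (a * Q) = 0) (h22 : C * (a * D) = b) : PairSub a b a := by
  refine ⟨!![P; C], !![Q, D], ?_⟩
  ext i j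
  fin_cases i <;> fin_cases j <;>
    simp [Matrix.mul_apply, Fin.sum_univ_one, mul_assoc, h11, h12, h21, h22]

theorem key {R : Type*} [NonUnitalRing R] (hR : IsSUnitalRing R) (a e : R)
    (he : e * e = e) (hea : ElemSub e a) (s t c d : R)
    (hse : s * e = s) (het : e * t = t) (hed : e * d = d) (hce : c * e = c)
    (hct : c * t = 0) (hsd : s * d = 0) (hst : s * t = e) :
    PairSub a (c * d) a := by
  obtain ⟨α₀, β₀, hαβ₀⟩ := hea
  obtain ⟨⟨u, hu⟩, ⟨v, hv⟩⟩ := hR a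
  obtain ⟨α, β, hαβ, hα⟩ : ∃ α β : R, α * a * β = e ∧ e * α = α := by
    refine ⟨e * α₀, β₀ * e, ?_, by rw [← mul_assoc, he]⟩
    rw [show e * α₀ * a * (β₀ * e) = e * (α₀ * a * β₀) * e by noncomm_ring, ← hαβ₀, he, he]
  -- rewrite rules
  have Ru : ∀ X : R, u * (a * X) = a * X := fun X => by rw [← mul_assoc, hu]
  have Rab : ∀ X : R, α * (a * (β * X)) = e * X := fun X => by
    rw [← mul_assoc, ← mul_assoc, hαβ]
  have Re : ∀ X : R, e * (e * X) = e * X := fun X => by rw [← mul_assoc, he]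
  have Rα : ∀ X : R, e * (α * X) = α * X := fun X => by rw [← mul_assoc, hα]
  have Rse : ∀ X : R, s * (e * X) = s * X := fun X => by rw [← mul_assoc, hse]
  have Rt : ∀ X : R, e * (t * X) = t * X := fun X => by rw [← mul_assoc, het]
  have Rce : ∀ X : R, c * (e * X) = c * X := fun X => by rw [← mul_assoc, hce]
  have Rct : ∀ X : R, c * (t * X) = 0 := fun X => by rw [← mul_assoc, hct, zero_mul]
  have Rst : ∀ X : R, s * (t * X) = e * X := fun X => by rw [← mul_assoc, hst]
  refine pairSub_of (u - a * (β * ((e - s) * α))) (c * α)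
      (v - β * ((e - t) * (α * a))) (β * d) ?_ ?_ ?_ ?_
  · simp only [mul_sub, sub_mul, mul_assoc, Ru, hu, hv, Rab, Re, Rα, Rse, Rt, Rst, hed,
      mul_zero, zero_mul, sub_zero, zero_sub]
    abel
  · simp only [mul_sub, sub_mul, mul_assoc, Ru, hv, Rab, Re, Rα, Rse, Rt, Rst, hed, hsd,
      mul_zero, zero_mul, sub_zero, zero_sub]
    abel
  · simp only [mul_sub, sub_mul, mul_assoc, Ru, hv, Rab, Re, Rα, Rse, Rt, Rst, Rce, Rct, hed,
      mul_zero, zero_mul, sub_zero, zero_sub]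
    abel
  · simp only [mul_sub, sub_mul, mul_assoc, Rab, Rce, hed]

/-- Lemma 3.9 (propinftyinK): let `R` be an s-unital ring, `a ∈ R`, and `e` an idempotent
with `e ≼ a`. Then:
(i) if `f` is an idempotent with `e ∼ f ≤ e`, then `e - f ∈ K(a)`;
(ii) if `e` is properly infinite, then `e ∈ K(a)`;
(iii) if `e` is infinite, then `a` is infinite. -/
theorem idempotent_subequivalent_facts {R : Type*} [NonUnitalRing R]
    (hR : IsSUnitalRing R) (a e : R)
    (he : IsIdempotentElem e) (hea : ElemSub e a) :
    (∀ f : R, IsIdempotentElem f → (∃ x y : R, e = x * y ∧ f = y * x) →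
        (e * f = f ∧ f * e = f) → e - f ∈ KSet a) ∧
    (IsProperlyInfiniteElem e → e ∈ KSet a) ∧
    (IsInfiniteIdem e → IsInfiniteElem a) := by
  have he' : e * e = e := he
  have part1 : ∀ f : R, IsIdempotentElem f → (∃ x y : R, e = x * y ∧ f = y * x) →
      (e * f = f ∧ f * e = f) → e - f ∈ KSet a := by
    rintro f hf0 ⟨x₀, y₀, hxy, hyx⟩ ⟨hef, hfe⟩
    have hf' : f * f = f := hf0
    have hfy : f * y₀ = y₀ * e := by rw [hyx, mul_assoc, ← hxy]
    have Re : ∀ X : R, e * (e * X) = e * X := fun X => by rw [← mul_assoc, he']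
    have Rf : ∀ X : R, f * (f * X) = f * X := fun X => by rw [← mul_assoc, hf']
    have Ref : ∀ X : R, e * (f * X) = f * X := fun X => by rw [← mul_assoc, hef]
    have Rfe : ∀ X : R, f * (e * X) = f * X := fun X => by rw [← mul_assoc, hfe]
    have Rxy : ∀ X : R, x₀ * (y₀ * X) = e * X := fun X => by rw [← mul_assoc, ← hxy]
    have Rfy : ∀ X : R, f * (y₀ * X) = y₀ * (e * X) := fun X => by
      rw [← mul_assoc, ← mul_assoc, hfy]
    have main := key hR a e he' hea (e * x₀ * f) (f * y₀ * e) (e - f) (e - f)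
      (by simp only [mul_assoc, Rfe, hfe])
      (by simp only [mul_assoc, Ref, hef])
      (by rw [mul_sub, he', hef])
      (by rw [sub_mul, he', hfe])
      (by simp only [sub_mul, mul_assoc, Ref, Rf, hef, hf', sub_self])
      (by simp only [mul_sub, mul_assoc, Rf, Rfe, hfe, hf', sub_self, mul_zero])
      (by simp only [mul_assoc, Rf, Rfy, Rxy, Re, he', hf', hef, hfe])
    have hcd : (e - f) * (e - f) = e - f := by
      rw [sub_mul, mul_sub, mul_sub, he', hef, hfe, hf', sub_self, sub_zero]
    show PairSub a (e - f) a
    exact hcd ▸ main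
  refine ⟨part1, ?_, ?_⟩
  · rintro ⟨-, A, B, hM⟩
    have h00 := congrFun (congrFun hM 0) 0
    have h01 := congrFun (congrFun hM 0) 1
    have h10 := congrFun (congrFun hM 1) 0
    have h11 := congrFun (congrFun hM 1) 1
    simp only [Matrix.mul_apply, Fin.sum_univ_one, Matrix.cons_val', Matrix.cons_val_zero,
      Matrix.empty_val', Matrix.cons_val_fin_one, Matrix.cons_val_one, Matrix.head_cons,
      Matrix.head_fin_const, Matrix.head_val'] at h00 h01 h10 h11
    set p : R := A 0 0
    set c : R := A 1 0
    set q : R := B 0 0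
    set d : R := B 0 1
    have hpq : p * e * q = e := h00.symm
    have hpd : p * e * d = 0 := h01.symm
    have hcq : c * e * q = 0 := h10.symm
    have hcd : c * e * d = e := h11.symm
    have Re : ∀ X : R, e * (e * X) = e * X := fun X => by rw [← mul_assoc, he']
    have Rcq : ∀ X : R, c * (e * (q * X)) = 0 := fun X => by
      rw [← mul_assoc, ← mul_assoc, hcq, zero_mul]
    have Rpq : ∀ X : R, p * (e * (q * X)) = e * X := fun X => by
      rw [← mul_assoc, ← mul_assoc, hpq]
    have Rpd : p * (e * d) = 0 := by rw [← mul_assoc, hpd]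
    have main := key hR a e he' hea (e * p * e) (e * q * e) (c * e) (e * d)
      (by rw [mul_assoc, he'])
      (by rw [← mul_assoc, ← mul_assoc, he'])
      (by rw [← mul_assoc, he'])
      (by rw [mul_assoc, he'])
      (by simp only [mul_assoc, Re, Rcq])
      (by simp only [mul_assoc, Re, Rpd, mul_zero])
      (by simp only [mul_assoc, Re, Rpq, he'])
    have heq : (c * e) * (e * d) = e := by
      rw [mul_assoc, ← mul_assoc e e d, he', ← mul_assoc, hcd]
    show PairSub a e a
    exact heq ▸ main
  · rintro ⟨-, f, hf0, hsim, hef, hfe, hne⟩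
    exact ⟨e - f, sub_ne_zero_of_ne (Ne.symm hne), part1 f hf0 hsim ⟨hef, hfe⟩⟩
end

section
/- Let R be an s-unital ring. If every nonzero right ideal in every nonzero quotient of R (by a two-sided ideal) contains an infinite idempotent, then R is properly purely infinite. -/
/-! ### Auxiliary machinery -/

section PairSubAux

variable {R : Type*} [NonUnitalRing R]

lemma prod_entry (α : Matrix (Fin 2) (Fin 1) R) (β : Matrix (Fin 1) (Fin 2) R) (c : R)
    (i j : Fin 2) : (α * !![c] * β) i j = α i 0 * c * β 0 j := by
  simp [Matrix.mul_apply, Fin.sum_univ_succ]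

lemma pairSub_of_quad {a x c p q r s : R} (h1 : a = p * c * q) (h2 : p * c * s = 0)
    (h3 : r * c * q = 0) (h4 : x = r * c * s) : PairSub a x c := by
  refine ⟨!![p; r], !![q, s], ?_⟩
  ext i j
  rw [prod_entry]
  fin_cases i <;> fin_cases j <;> simp [← h1, h2, h3, ← h4]

lemma quad_of_pairSub {a x c : R} (hp : PairSub a x c) :
    ∃ p q r s : R, a = p * c * q ∧ p * c * s = 0 ∧ r * c * q = 0 ∧ x = r * c * s := by
  obtain ⟨α, β, hm⟩ := hp
  have hent : ∀ i j, !![a, 0; 0, x] i j = α i 0 * c * β 0 j := by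
    intro i j; rw [hm, prod_entry]
  refine ⟨α 0 0, β 0 0, α 1 0, β 0 1, ?_, ?_, ?_, ?_⟩
  · simpa using hent 0 0
  · simpa using (hent 0 1).symm
  · simpa using (hent 1 0).symm
  · simpa using hent 1 1

/-- An orthogonal "frame" over `a` realizing a 2×2 matrix of errors. -/
structure Frame2 (a p q r1 r2 s1 s2 k11 k12 k21 k22 : R) : Prop where
  base : a = p * a * q
  ps1 : p * a * s1 = 0
  ps2 : p * a * s2 = 0
  rq1 : r1 * a * q = 0
  rq2 : r2 * a * q = 0
  he11 : r1 * a * s1 = k11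
  he12 : r1 * a * s2 = k12
  he21 : r2 * a * s1 = k21
  he22 : r2 * a * s2 = k22

lemma Frame2.add {a p q r1 r2 s1 s2 k11 k12 k21 k22 p' q' r1' r2' s1' s2' l11 l12 l21 l22 : R}
    (F : Frame2 a p q r1 r2 s1 s2 k11 k12 k21 k22)
    (G : Frame2 a p' q' r1' r2' s1' s2' l11 l12 l21 l22) :
    Frame2 a (p * p') (q' * q) (r1 * p' + r1') (r2 * p' + r2') (q' * s1 + s1') (q' * s2 + s2')
      (k11 + l11) (k12 + l12) (k21 + l21) (k22 + l22) := by
  have expand : ∀ y z y' z' : R,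
      (y * p' + y') * a * (q' * z + z') =
        y * (p' * a * q') * z + y * (p' * a * z') + (y' * a * q') * z + y' * a * z' := by
    intro y z y' z'; noncomm_ring
  have expand1 : ∀ z z' : R, (p * p') * a * (q' * z + z')
      = p * (p' * a * q') * z + p * (p' * a * z') := by
    intro z z'; noncomm_ring
  have expand2 : ∀ y y' : R, (y * p' + y') * a * (q' * q)
      = y * (p' * a * q') * q + (y' * a * q') * q := by
    intro y y'; noncomm_ring
  constructor
  · have : (p * p') * a * (q' * q) = p * (p' * a * q') * q := by noncomm_ring
    rw [this, ← G.base, ← F.base]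
  · rw [expand1, ← G.base, G.ps1, F.ps1, mul_zero, add_zero]
  · rw [expand1, ← G.base, G.ps2, F.ps2, mul_zero, add_zero]
  · rw [expand2, ← G.base, F.rq1, G.rq1, zero_mul, add_zero]
  · rw [expand2, ← G.base, F.rq2, G.rq2, zero_mul, add_zero]
  · rw [expand, ← G.base, F.he11, G.ps1, G.rq1, G.he11, mul_zero, zero_mul, add_zero, add_zero]
  · rw [expand, ← G.base, F.he12, G.ps2, G.rq1, G.he12, mul_zero, zero_mul, add_zero, add_zero]
  · rw [expand, ← G.base, F.he21, G.ps1, G.rq2, G.he21, mul_zero, zero_mul, add_zero, add_zero]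
  · rw [expand, ← G.base, F.he22, G.ps2, G.rq2, G.he22, mul_zero, zero_mul, add_zero, add_zero]

lemma Frame2.congr {a p q r1 r2 s1 s2 k11 k12 k21 k22 l11 l12 l21 l22 : R}
    (F : Frame2 a p q r1 r2 s1 s2 k11 k12 k21 k22)
    (h11 : k11 = l11) (h12 : k12 = l12) (h21 : k21 = l21) (h22 : k22 = l22) :
    Frame2 a p q r1 r2 s1 s2 l11 l12 l21 l22 := by
  subst h11 h12 h21 h22; exact F

lemma frame2_single11 {a x p q r s : R} (h1 : a = p * a * q) (h2 : p * a * s = 0)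
    (h3 : r * a * q = 0) (h4 : x = r * a * s) :
    Frame2 a p q r 0 s 0 x 0 0 0 := by
  constructor <;> simp [← h1, h2, h3, h4.symm]

lemma frame2_single12 {a x p q r s : R} (h1 : a = p * a * q) (h2 : p * a * s = 0)
    (h3 : r * a * q = 0) (h4 : x = r * a * s) :
    Frame2 a p q r 0 0 s 0 x 0 0 := by
  constructor <;> simp [← h1, h2, h3, h4.symm]

lemma frame2_single21 {a x p q r s : R} (h1 : a = p * a * q) (h2 : p * a * s = 0)
    (h3 : r * a * q = 0) (h4 : x = r * a * s) :
    Frame2 a p q 0 r s 0 0 0 x 0 := by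
  constructor <;> simp [← h1, h2, h3, h4.symm]

lemma frame2_single22 {a x p q r s : R} (h1 : a = p * a * q) (h2 : p * a * s = 0)
    (h3 : r * a * q = 0) (h4 : x = r * a * s) :
    Frame2 a p q 0 r 0 s 0 0 0 x := by
  constructor <;> simp [← h1, h2, h3, h4.symm]

/-- master lemma with explicit frame -/
lemma masterK_frame {a x p q r s k1 k2 k3 k4 p0 q0 R1 R2 S1 S2 : R}
    (F : Frame2 a p0 q0 R1 R2 S1 S2 k1 (-k2) (-k3) k4)
    (e1 : a = p * a * q + k1) (e2 : p * a * s = k2) (e3 : r * a * q = k3)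
    (e4 : x = r * a * s + k4) : x ∈ KSet a := by
  have expand : ∀ y z y' z' : R,
      (y * p0 + y') * a * (q0 * z + z') =
        y * (p0 * a * q0) * z + y * (p0 * a * z') + (y' * a * q0) * z + y' * a * z' := by
    intro y z y' z'; noncomm_ring
  refine pairSub_of_quad (p := p * p0 + R1) (q := q0 * q + S1) (r := r * p0 + R2)
    (s := q0 * s + S2) ?_ ?_ ?_ ?_
  · rw [expand, ← F.base, F.ps1, F.rq1, F.he11, mul_zero, zero_mul, add_zero, add_zero]
    exact e1
  · rw [expand, ← F.base, F.ps2, F.rq1, F.he12, mul_zero, zero_mul, e2]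
    abel
  · rw [expand, ← F.base, F.ps1, F.rq2, F.he21, mul_zero, zero_mul, e3]
    abel
  · rw [expand, ← F.base, F.ps2, F.rq2, F.he22, mul_zero, zero_mul, add_zero, add_zero]
    exact e4

/-- Key lemma: a `PairSub`-type relation with errors in `K(a)` implies exact membership. -/
lemma masterK {a x p q r s k1 k2 k3 k4 : R}
    (hk1 : k1 ∈ KSet a) (hk2 : k2 ∈ KSet a) (hk3 : k3 ∈ KSet a) (hk4 : k4 ∈ KSet a)
    (e1 : a = p * a * q + k1) (e2 : p * a * s = k2) (e3 : r * a * q = k3)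
    (e4 : x = r * a * s + k4) : x ∈ KSet a := by
  obtain ⟨p1, q1, r1, s1, f1, f2, f3, f4⟩ := quad_of_pairSub hk1
  obtain ⟨p2, q2, r2, s2, g1, g2, g3, g4⟩ := quad_of_pairSub hk2
  obtain ⟨p3, q3, r3, s3, i1, i2, i3, i4⟩ := quad_of_pairSub hk3
  obtain ⟨p4, q4, r4, s4, j1, j2, j3, j4⟩ := quad_of_pairSub hk4
  have F11 := frame2_single11 f1 f2 f3 f4
  have F12 := frame2_single12 g1 g2
    (show (-r2) * a * q2 = 0 by rw [neg_mul, neg_mul, g3, neg_zero])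
    (show -k2 = (-r2) * a * s2 by rw [neg_mul, neg_mul, ← g4])
  have F21 := frame2_single21 i1 i2
    (show (-r3) * a * q3 = 0 by rw [neg_mul, neg_mul, i3, neg_zero])
    (show -k3 = (-r3) * a * s3 by rw [neg_mul, neg_mul, ← i4])
  have F22 := frame2_single22 j1 j2 j3 j4
  exact masterK_frame ((((F11.add F12).add F21).add F22).congr
    (by simp) (by simp) (by simp) (by simp)) e1 e2 e3 e4

lemma kset_zero {a u v : R} (hu : u * a = a) (hv : a * v = a) : (0 : R) ∈ KSet a :=
  pairSub_of_quad (p := u) (q := v) (r := 0) (s := 0)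
    (by rw [hu, hv]) (by rw [mul_zero]) (by rw [zero_mul, zero_mul]) (by rw [zero_mul, mul_zero])

lemma kset_neg {a x : R} (hx : x ∈ KSet a) : -x ∈ KSet a := by
  obtain ⟨p, q, r, s, h1, h2, h3, h4⟩ := quad_of_pairSub hx
  exact pairSub_of_quad h1 h2
    (show (-r) * a * q = 0 by rw [neg_mul, neg_mul, h3, neg_zero])
    (show -x = (-r) * a * s by rw [neg_mul, neg_mul, ← h4])

lemma kset_mul_left {a x t : R} (hx : x ∈ KSet a) : t * x ∈ KSet a := by
  obtain ⟨p, q, r, s, h1, h2, h3, h4⟩ := quad_of_pairSub hx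
  refine pairSub_of_quad (r := t * r) (s := s) h1 h2 ?_ ?_
  · rw [mul_assoc t r a, mul_assoc t (r * a) q, h3, mul_zero]
  · rw [h4, mul_assoc t r a, mul_assoc t (r * a) s]

lemma kset_mul_right {a x t : R} (hx : x ∈ KSet a) : x * t ∈ KSet a := by
  obtain ⟨p, q, r, s, h1, h2, h3, h4⟩ := quad_of_pairSub hx
  refine pairSub_of_quad (r := r) (s := s * t) h1 ?_ h3 ?_
  · rw [← mul_assoc, h2, zero_mul]
  · rw [h4, mul_assoc]

lemma kset_add {a x y : R} (h0 : (0 : R) ∈ KSet a) (hx : x ∈ KSet a) (hy : y ∈ KSet a) :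
    x + y ∈ KSet a := by
  obtain ⟨p, q, r, s, h1, h2, h3, h4⟩ := quad_of_pairSub hx
  exact masterK h0 h0 h0 hy (by rw [add_zero]; exact h1) (by rw [h2]) (by rw [h3])
    (by rw [← h4])

end PairSubAux

section CoreConstruction

variable {Q : Type*} [NonUnitalRing Q]

/-- The core construction: from an infinite idempotent `e = e*b*w` reachable from `b`,
with `e = X*Y`, `f = Y*X ≤ e`, `g = e - f`, produce witnesses for `b ⊕ g ≼ b`. -/
lemma core_construction (b u v w e f X Y g : Q)
    (hub : u * b = b) (hbv : b * v = b) (hebw : e * b * w = e)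
    (hXY : X * Y = e) (hee : e * e = e) (hef : e * f = f) (hfe : f * e = f) (hff : f * f = f)
    (hXe : X * e = X) (hXf : X * f = X) (heY : e * Y = Y) (hfY : f * Y = Y)
    (hg : g = e - f) :
    ∃ p q r s : Q, b = p * b * q ∧ p * b * s = 0 ∧ r * b * q = 0 ∧ g = r * b * s := by
  have hebw' : e * (b * w) = e := by rw [← mul_assoc]; exact hebw
  have hzbw : ∀ z : Q, z * e = z → z * (b * w) = z := fun z hz => by
    calc z * (b * w) = (z * e) * (b * w) := by rw [hz]
    _ = z * (e * (b * w)) := by rw [mul_assoc]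
    _ = z := by rw [hebw', hz]
  have hA : ∀ z ζ : Q, z * e = z → z * (b * (w * ζ)) = z * ζ := fun z ζ hz => by
    calc z * (b * (w * ζ)) = (z * (b * w)) * ζ := by rw [← mul_assoc b w, ← mul_assoc]
    _ = z * ζ := by rw [hzbw z hz]
  have hge : g * e = g := by rw [hg, sub_mul, hee, hfe]
  have hgg : g * g = g := by
    rw [hg, sub_mul, mul_sub, mul_sub, hee, hef, hfe, hff]; abel
  have heg : e * g = g := by rw [hg, mul_sub, hee, hef]
  have hXg : X * g = 0 := by rw [hg, mul_sub, hXe, hXf, sub_self]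
  have hgY : g * Y = 0 := by rw [hg, sub_mul, heY, hfY, sub_self]
  set q2 : Q := v - w * (e * (b * v)) + w * (Y * (b * v)) with hq2def
  have hPbZ : ∀ Z : Q, (u - u * b * (w * e) + u * b * (w * X)) * b * Z
      = b * Z - b * (w * (e * (b * Z))) + b * (w * (X * (b * Z))) := by
    intro Z
    have h1 : (u - u * b * (w * e) + u * b * (w * X)) * b * Z
        = u * (b * Z) - u * (b * (w * (e * (b * Z)))) + u * (b * (w * (X * (b * Z)))) := by
      noncomm_ring
    rw [h1, ← mul_assoc u b, ← mul_assoc u b, ← mul_assoc u b, hub]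
  have hq2e : e * (b * q2) = Y * b := by
    have h1 : e * (b * q2)
        = e * (b * v) - e * (b * (w * (e * (b * v)))) + e * (b * (w * (Y * (b * v)))) := by
      rw [hq2def]; noncomm_ring
    rw [h1, hA e _ hee, hA e _ hee, ← mul_assoc e e, hee, ← mul_assoc e Y, heY, hbv]
    abel
  have hq2X : X * (b * q2) = e * b := by
    have h1 : X * (b * q2)
        = X * (b * v) - X * (b * (w * (e * (b * v)))) + X * (b * (w * (Y * (b * v)))) := by
      rw [hq2def]; noncomm_ring
    rw [h1, hA X _ hXe, hA X _ hXe, ← mul_assoc X e, hXe, ← mul_assoc X Y, hXY, hbv]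
    abel
  have hq2g : g * (b * q2) = 0 := by
    have h1 : g * (b * q2)
        = g * (b * v) - g * (b * (w * (e * (b * v)))) + g * (b * (w * (Y * (b * v)))) := by
      rw [hq2def]; noncomm_ring
    rw [h1, hA g _ hge, hA g _ hge, ← mul_assoc g e, hge, ← mul_assoc g Y, hgY, hbv]
    simp
  have hbq2 : b * q2 = b - b * (w * (e * b)) + b * (w * (Y * b)) := by
    have h1 : b * q2 = b * v - b * (w * (e * (b * v))) + b * (w * (Y * (b * v))) := by
      rw [hq2def]; noncomm_ring
    rw [h1, hbv]
  refine ⟨u - u * b * (w * e) + u * b * (w * X), q2, g, w * g, ?_, ?_, ?_, ?_⟩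
  · rw [hPbZ q2, hq2e, hq2X, hbq2]; abel
  · rw [hPbZ (w * g), hA e g hee, hA X g hXe, heg, hXg, mul_zero, mul_zero]
    abel
  · rw [mul_assoc g b q2, hq2g]
  · rw [mul_assoc, hA g g hge, hgg]

end CoreConstruction

/-- Proposition 3.13 (IdealInfIdemImpliesPi): let `R` be an s-unital ring. If every nonzero
right ideal in every nonzero quotient of `R` contains an infinite idempotent, then `R` is
properly purely infinite. -/
theorem properlyPurelyInfinite_of_right_ideals_contain_infinite_idempotents
    {R : Type*} [NonUnitalRing R] (hR : IsSUnitalRing R)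
    (h : ∀ I : TwoSidedIdeal R, (∃ q : I.ringCon.Quotient, q ≠ 0) →
        ∀ S : AddSubgroup I.ringCon.Quotient, (∀ x ∈ S, ∀ r : I.ringCon.Quotient, x * r ∈ S) →
        (∃ x ∈ S, x ≠ 0) → ∃ e ∈ S, IsInfiniteIdem e) :
    IsProperlyPurelyInfiniteRing R := by
  intro a ha
  obtain ⟨⟨u, hu⟩, ⟨v, hv⟩⟩ := hR a
  have h0K : (0 : R) ∈ KSet a := kset_zero hu hv
  set I : TwoSidedIdeal R := TwoSidedIdeal.mk' (KSet a) h0K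
    (fun hx hy => kset_add h0K hx hy) (fun hx => kset_neg hx)
    (fun {x y} hy => kset_mul_left hy) (fun {x y} hx => kset_mul_right hx) with hIdef
  have hIK : ∀ z : R, z ∈ I ↔ z ∈ KSet a := fun z => by
    rw [hIdef]
    exact TwoSidedIdeal.mem_mk' (KSet a) h0K
      (fun hx hy => kset_add h0K hx hy) (fun hx => kset_neg hx)
      (fun {x y} hy => kset_mul_left hy) (fun {x y} hx => kset_mul_right hx) z
  set c : RingCon R := I.ringCon with hcdef
  have hmem_of : ∀ z : R, (z : c.Quotient) = 0 → z ∈ KSet a := by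
    intro z hz
    have h0 : (z : c.Quotient) = ((0 : R) : c.Quotient) := by rw [hz, RingCon.coe_zero]
    exact (hIK z).mp ((TwoSidedIdeal.mem_iff I z).mpr ((RingCon.eq c).mp h0))
  have hof : ∀ z : R, z ∈ KSet a → (z : c.Quotient) = 0 := by
    intro z hz
    have h0 : c z 0 := (TwoSidedIdeal.mem_iff I z).mp ((hIK z).mpr hz)
    calc (z : c.Quotient) = ((0 : R) : c.Quotient) := (RingCon.eq c).mpr h0
    _ = 0 := RingCon.coe_zero _
  refine ⟨ha, ?_⟩
  by_cases hq : (a : c.Quotient) = 0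
  · exact hmem_of a hq
  · exfalso
    -- the right ideal generated by `a` in the quotient
    set S : AddSubgroup c.Quotient :=
      { carrier := {x | ∃ (n : ℤ) (t : c.Quotient), x = n • (a : c.Quotient) + (a : c.Quotient) * t}
        zero_mem' := ⟨0, 0, by simp⟩
        add_mem' := by
          rintro x y ⟨n, t, rfl⟩ ⟨m, t', rfl⟩
          exact ⟨n + m, t + t', by rw [add_smul, mul_add]; abel⟩
        neg_mem' := by
          rintro x ⟨n, t, rfl⟩
          exact ⟨-n, -t, by rw [neg_smul, mul_neg]; abel⟩ } with hSdef
    have hSmul : ∀ x ∈ S, ∀ r : c.Quotient, x * r ∈ S := by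
      rintro x ⟨n, t, rfl⟩ r
      refine ⟨0, n • r + t * r, ?_⟩
      rw [zero_smul, zero_add, mul_add, add_mul, smul_mul_assoc, mul_smul_comm, mul_assoc]
    have hSne : ∃ x ∈ S, x ≠ 0 := ⟨(a : c.Quotient), ⟨1, 0, by simp⟩, hq⟩
    obtain ⟨e, heS, heIdem, f, hfIdem, ⟨x₀, y₀, hxy, hyx⟩, hef, hfe, hfne⟩ :=
      h I ⟨(a : c.Quotient), hq⟩ S hSmul hSne
    obtain ⟨n, t, hent⟩ := heS
    have hee : e * e = e := heIdem
    have hff : f * f = f := hfIdem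
    set b : c.Quotient := (a : c.Quotient) with hbdef
    set w : c.Quotient := n • e + t * e with hwdef
    set X : c.Quotient := e * x₀ * f with hXdef
    set Y : c.Quotient := f * y₀ * e with hYdef
    set g : c.Quotient := e - f with hgdef
    have hgne : g ≠ 0 := sub_ne_zero.mpr (Ne.symm hfne)
    have hub : (u : c.Quotient) * b = b := by
      rw [hbdef, ← RingCon.coe_mul, hu]
    have hbv : b * (v : c.Quotient) = b := by
      rw [hbdef, ← RingCon.coe_mul, hv]
    have hebw : e * b * w = e := by
      have h1 : e * b * w = n • (e * b * e) + e * (b * t) * e := by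
        rw [hwdef, mul_add, mul_smul_comm, ← mul_assoc, mul_assoc e b t]
      have h2 : e * (n • b + b * t) * e = n • (e * b * e) + e * (b * t) * e := by
        rw [mul_add, add_mul, mul_smul_comm, smul_mul_assoc]
      rw [h1, ← h2, ← hent, hee, hee]
    have hxy' : x₀ * f * y₀ = e := by
      rw [hyx, ← mul_assoc, ← hxy, mul_assoc, ← hxy, hee]
    have hyx' : y₀ * e * x₀ = f := by
      rw [hxy, ← mul_assoc, ← hyx, mul_assoc, ← hyx, hff]
    have hXY : X * Y = e := by
      rw [hXdef, hYdef]
      calc (e * x₀ * f) * (f * y₀ * e) = e * (x₀ * (f * (f * (y₀ * e)))) := by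
            simp only [mul_assoc]
      _ = e * (x₀ * ((f * f) * (y₀ * e))) := by rw [← mul_assoc f f]
      _ = e * ((x₀ * f * y₀) * e) := by simp only [mul_assoc, hff]
      _ = e * (e * e) := by rw [hxy']
      _ = e := by rw [hee, hee]
    have hXe : X * e = X := by rw [hXdef, mul_assoc, hfe]
    have hXf : X * f = X := by rw [hXdef, mul_assoc, hff]
    have heY : e * Y = Y := by rw [hYdef, ← mul_assoc, ← mul_assoc, hef]
    have hfY : f * Y = Y := by rw [hYdef, ← mul_assoc, ← mul_assoc, hff]
    obtain ⟨P, Q2, RR, S2, H1, H2, H3, H4⟩ :=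
      core_construction b (u : c.Quotient) (v : c.Quotient) w e f X Y g hub hbv hebw hXY hee
        hef hfe hff hXe hXf heY hfY hgdef
    -- lift everything back to R
    have hsur : ∀ z : c.Quotient, ∃ y : R, (y : c.Quotient) = z := fun z => Quot.exists_rep z
    obtain ⟨p1, hp1⟩ := hsur P
    obtain ⟨q1, hq1⟩ := hsur Q2
    obtain ⟨r1, hr1⟩ := hsur RR
    obtain ⟨s1, hs1⟩ := hsur S2
    obtain ⟨g1, hg1⟩ := hsur g
    have m1 : a - p1 * a * q1 ∈ KSet a := by
      refine hmem_of _ ?_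
      rw [RingCon.coe_sub, RingCon.coe_mul, RingCon.coe_mul, hp1, hq1]
      exact sub_eq_zero_of_eq H1
    have m2 : p1 * a * s1 ∈ KSet a := by
      refine hmem_of _ ?_
      rw [RingCon.coe_mul, RingCon.coe_mul, hp1, hs1]
      exact H2
    have m3 : r1 * a * q1 ∈ KSet a := by
      refine hmem_of _ ?_
      rw [RingCon.coe_mul, RingCon.coe_mul, hr1, hq1]
      exact H3
    have m4 : g1 - r1 * a * s1 ∈ KSet a := by
      refine hmem_of _ ?_
      rw [RingCon.coe_sub, RingCon.coe_mul, RingCon.coe_mul, hg1, hr1, hs1]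
      exact sub_eq_zero_of_eq H4
    have hglK : g1 ∈ KSet a :=
      masterK m1 m2 m3 m4 (by abel) rfl rfl (by abel)
    have : g = 0 := by rw [← hg1]; exact hof g1 hglK
    exact hgne this
end

section
/- Let R be a von Neumann regular ring (for every a ∈ R there exists x ∈ R with a = axa). Then R is properly purely infinite if and only if every nonzero idempotent of R is properly infinite. -/
/-- Corollary 3.15 (RegularInftyIdempotentsPi): a von Neumann regular ring is properly purely
infinite if and only if all of its nonzero idempotents are properly infinite. -/
theorem regular_properlyPurelyInfinite_iff_idempotents_properlyInfinite
    {R : Type*} [NonUnitalRing R] (hreg : ∀ a : R, ∃ x : R, a = a * x * a) :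
    IsProperlyPurelyInfiniteRing R ↔
      ∀ e : R, IsIdempotentElem e → e ≠ 0 → IsProperlyInfiniteElem e := by
  constructor
  · intro h e _ hne
    exact h e hne
  · intro h a ha
    obtain ⟨x, hx⟩ := hreg a
    have hea : (a * x) * a = a := hx.symm
    have hidem : IsIdempotentElem (a * x) := by
      unfold IsIdempotentElem
      rw [← mul_assoc, hea]
    have hne : a * x ≠ 0 := by
      intro h0
      apply ha
      rw [← hea, h0, zero_mul]
    obtain ⟨-, α, β, heq⟩ := h (a * x) hidem hne
    refine ⟨ha, α, !![x] * (β * !![a, 0; 0, a]), ?_⟩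
    have hm : (!![a] * !![x] : Matrix (Fin 1) (Fin 1) R) = !![a * x] := by
      ext i j; fin_cases i; fin_cases j; simp [Matrix.mul_apply]
    have key : α * !![a] * (!![x] * (β * !![a, 0; 0, a]))
        = (α * !![a * x] * β) * !![a, 0; 0, a] := by
      calc α * !![a] * (!![x] * (β * !![a, 0; 0, a]))
          = α * (!![a] * !![x]) * (β * !![a, 0; 0, a]) := by
            simp only [Matrix.mul_assoc]
        _ = (α * !![a * x] * β) * !![a, 0; 0, a] := by
            rw [hm]; simp only [Matrix.mul_assoc]
    rw [key, ← heq]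
    ext i j
    fin_cases i <;> fin_cases j <;>
      simp [Matrix.mul_apply, Fin.sum_univ_succ, hea]
end

section
/- Let K be a field, let A and B be s-unital (not necessarily unital) K-algebras, and let R = A ⊗_K B with multiplication determined by (a₁ ⊗ b₁)(a₂ ⊗ b₂) = a₁a₂ ⊗ b₁b₂. If a ∈ A is nonzero and b ∈ B is properly infinite, then a ⊗ b is a properly infinite element of R. -/
open scoped TensorProduct

/-! Over a field, functionals `f, g` with `f a ≠ 0 ≠ g b` pair with `a ⊗ b` to `f a * g b ≠ 0`.
If `diag(b, b) = α b β` entrywise and `u * a = a = a * v`, then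
`diag(a ⊗ b, a ⊗ b) = (u ⊗ α) (a ⊗ b) (v ⊗ β)`. -/

theorem TensorProduct.tmul_eq_zero_iff {R M N : Type*} [CommSemiring R] [NoZeroDivisors R]
    [AddCommMonoid M] [Module R M] [Module.Projective R M]
    [AddCommMonoid N] [Module R N] [Module.Projective R N] {m : M} {n : N} :
    m ⊗ₜ[R] n = 0 ↔ m = 0 ∨ n = 0 := by
  refine ⟨fun h => ?_, by rintro (rfl | rfl) <;> simp⟩
  by_contra! hmn
  obtain ⟨f, hf⟩ := Module.Projective.exists_dual_ne_zero R hmn.1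
  obtain ⟨g, hg⟩ := Module.Projective.exists_dual_ne_zero R hmn.2
  have hfg := TensorProduct.dualDistrib_apply f g m n
  rw [h, map_zero] at hfg
  exact mul_ne_zero hf hg hfg.symm

theorem pairSub_iff_s10 {R : Type*} [NonUnitalRing R] {x y z : R} :
    PairSub x y z ↔ ∃ α β : Fin 2 → R, ∀ i j, !![x, 0; 0, y] i j = α i * z * β j := by
  constructor
  · rintro ⟨α, β, h⟩
    refine ⟨fun i => α i 0, fun j => β 0 j, fun i j => ?_⟩
    simpa [Matrix.mul_apply] using congrFun (congrFun h i) j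
  · rintro ⟨α, β, h⟩
    refine ⟨Matrix.of fun i _ => α i, Matrix.of fun _ j => β j, ?_⟩
    ext i j
    simpa [Matrix.mul_apply] using h i j

theorem PairSub.tmul_left {K A B : Type*} [CommSemiring K]
    [NonUnitalRing A] [Module K A] [SMulCommClass K A A] [IsScalarTower K A A]
    [NonUnitalRing B] [Module K B] [SMulCommClass K B B] [IsScalarTower K B B]
    {a u v : A} (hu : u * a = a) (hv : a * v = a) {x y z : B} (h : PairSub x y z) :
    PairSub (a ⊗ₜ[K] x) (a ⊗ₜ[K] y) (a ⊗ₜ[K] z) := by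
  obtain ⟨α, β, h⟩ := pairSub_iff_s10.mp h
  refine pairSub_iff_s10.mpr ⟨fun i => u ⊗ₜ α i, fun j => v ⊗ₜ β j, fun i j => ?_⟩
  have hdiag : (!![a ⊗ₜ[K] x, 0; 0, a ⊗ₜ[K] y] : Matrix (Fin 2) (Fin 2) (A ⊗[K] B)) i j =
      a ⊗ₜ (!![x, 0; 0, y] i j) := by
    fin_cases i <;> fin_cases j <;> simp
  rw [hdiag, h, Algebra.TensorProduct.tmul_mul_tmul, Algebra.TensorProduct.tmul_mul_tmul, hu, hv]

theorem tmul_properlyInfinite_general {K A B : Type*} [Field K]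
    [NonUnitalRing A] [Module K A] [SMulCommClass K A A] [IsScalarTower K A A]
    [NonUnitalRing B] [Module K B] [SMulCommClass K B B] [IsScalarTower K B B]
    (hA : IsSUnitalRing A)
    (a : A) (ha : a ≠ 0) (b : B) (hb : IsProperlyInfiniteElem b) :
    IsProperlyInfiniteElem (a ⊗ₜ[K] b : A ⊗[K] B) := by
  obtain ⟨hb0, hbb⟩ := hb
  obtain ⟨⟨u, hu⟩, ⟨v, hv⟩⟩ := hA a
  exact ⟨fun h => (TensorProduct.tmul_eq_zero_iff.mp h).elim ha hb0, hbb.tmul_left hu hv⟩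

/-- Lemma 4.1 (elementtensorpropinf): let `A`, `B` be s-unital algebras over a field `K` and
`R = A ⊗_K B` (with multiplication determined by `(a₁ ⊗ b₁)(a₂ ⊗ b₂) = a₁a₂ ⊗ b₁b₂`).
If `a ∈ A` is nonzero and `b ∈ B` is properly infinite, then `a ⊗ b` is a properly infinite
element of `R`. -/
theorem tmul_properlyInfinite {K A B : Type*} [Field K]
    [NonUnitalRing A] [Module K A] [SMulCommClass K A A] [IsScalarTower K A A]
    [NonUnitalRing B] [Module K B] [SMulCommClass K B B] [IsScalarTower K B B]
    (hA : IsSUnitalRing A) (hB : IsSUnitalRing B)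
    (a : A) (ha : a ≠ 0) (b : B) (hb : IsProperlyInfiniteElem b) :
    IsProperlyInfiniteElem (a ⊗ₜ[K] b : A ⊗[K] B) :=
  tmul_properlyInfinite_general hA a ha b hb
end

section
/- Let R be a purely infinite prime ring. Then no corner of R is a division ring: there is no idempotent e ∈ R with e ≠ 0 such that every nonzero element x of eRe has a two-sided inverse in eRe with respect to the identity e (i.e. there is y ∈ eRe with xy = yx = e). -/
section AuxPrimePiNoDivCorners

variable {R : Type*} [NonUnitalRing R]

private lemma memRaR_single_aux (a x y : R) : MemRaR a (x * a * y) :=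
  ⟨1, ![x], ![y], by simp⟩

private lemma memRaR_add_aux {a b c : R} (hb : MemRaR a b) (hc : MemRaR a c) :
    MemRaR a (b + c) := by
  obtain ⟨n, x, y, rfl⟩ := hb
  obtain ⟨m, x', y', rfl⟩ := hc
  exact ⟨n + m, Fin.append x x', Fin.append y y', by
    simp [Fin.sum_univ_add, Fin.append_left, Fin.append_right]⟩

private lemma memRaR_sub_aux {a b c : R} (hb : MemRaR a b) (hc : MemRaR a c) :
    MemRaR a (b - c) := by
  obtain ⟨n, x, y, rfl⟩ := hb
  obtain ⟨m, x', y', rfl⟩ := hc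
  refine ⟨n + m, Fin.append x (fun i => -x' i), Fin.append y y', by
    simp [Fin.sum_univ_add, Fin.append_left, Fin.append_right, neg_mul, sub_eq_add_neg]⟩

/-- Rank argument: if `e + q = x * e * y` with `q` a nonzero idempotent orthogonal to `e`,
and the corner `eRe` is a division ring, we get a contradiction. -/
private lemma rank_contradiction_aux {e q : R} (he : e * e = e) (hene : e ≠ 0)
    (hdiv : ∀ x : R, (∃ r : R, x = e * r * e) → x ≠ 0 →
      ∃ y : R, (∃ r : R, y = e * r * e) ∧ x * y = e ∧ y * x = e)
    (hq : q * q = q) (hqne : q ≠ 0) (heq : e * q = 0) (hqe : q * e = 0)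
    {x y : R} (h : e + q = x * e * y) : False := by
  have H : ∀ a b : R, a * x * e * (e * y * b) = a * (e + q) * b := by
    intro a b
    rw [h]
    have : a * x * e * (e * y * b) = a * (x * (e * e) * y) * b := by noncomm_ring
    rw [this, he]
  have h1 : (e * x * e) * (e * y * e) = e := by
    rw [H e e, mul_add, heq, add_zero, he, he]
  have h2 : (e * x * e) * (e * y * q) = 0 := by
    rw [H e q, mul_add, heq, add_zero, he, heq]
  have h3 : (q * x * e) * (e * y * q) = q := by
    rw [H q q, mul_add, hqe, zero_add, hq, hq]
  have hane : e * x * e ≠ 0 := by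
    intro h0
    rw [h0, zero_mul] at h1
    exact hene h1.symm
  obtain ⟨v, -, -, hva⟩ := hdiv (e * x * e) ⟨x, rfl⟩ hane
  have hd : e * y * q = 0 := by
    have he1 : e * (e * y * q) = e * y * q := by
      rw [← mul_assoc, ← mul_assoc, he]
    calc e * y * q = e * (e * y * q) := he1.symm
      _ = (v * (e * x * e)) * (e * y * q) := by rw [hva]
      _ = v * ((e * x * e) * (e * y * q)) := by rw [mul_assoc]
      _ = 0 := by rw [h2, mul_zero]
  rw [hd, mul_zero] at h3
  exact hqne h3.symm

/-- From a nonzero `z` with `z * e = 0`, build a nonzero idempotent `q ∈ ReR`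
orthogonal to `e`. -/
private lemma build_q_left_aux
    (hprime : ∀ a b : R, (∀ r : R, a * r * b = 0) → a = 0 ∨ b = 0)
    {e : R} (he : e * e = e) (hene : e ≠ 0)
    (hdiv : ∀ x : R, (∃ r : R, x = e * r * e) → x ≠ 0 →
      ∃ y : R, (∃ r : R, y = e * r * e) ∧ x * y = e ∧ y * x = e)
    {z : R} (hz : z ≠ 0) (hze : z * e = 0) :
    ∃ q : R, q * q = q ∧ q ≠ 0 ∧ e * q = 0 ∧ q * e = 0 ∧ MemRaR e q := by
  have hex : ∃ r, e * r * z ≠ 0 := by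
    by_contra hc
    push_neg at hc
    rcases hprime e z hc with h | h
    · exact hene h
    · exact hz h
  obtain ⟨r, hr⟩ := hex
  obtain ⟨w, hw⟩ : ∃ w : R, w = e * r * z := ⟨_, rfl⟩
  rw [← hw] at hr
  have hew : e * w = w := by rw [hw, ← mul_assoc, ← mul_assoc, he]
  have hwe : w * e = 0 := by rw [hw, mul_assoc, hze, mul_zero]
  have hex2 : ∃ s, w * s * e ≠ 0 := by
    by_contra hc
    push_neg at hc
    rcases hprime w e hc with h | h
    · exact hr h
    · exact hene h
  obtain ⟨s, hs⟩ := hex2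
  have hmform : w * s * e = e * (w * s) * e := by rw [← mul_assoc, hew]
  obtain ⟨v, ⟨t, hvt⟩, hmv, hvm⟩ := hdiv (w * s * e) ⟨w * s, hmform⟩ hs
  have hev : e * v = v := by rw [hvt, ← mul_assoc, ← mul_assoc, he]
  obtain ⟨u, hu⟩ : ∃ u : R, u = s * v := ⟨_, rfl⟩
  have hwu : w * u = e := by
    calc w * u = w * s * v := by rw [hu, mul_assoc]
      _ = w * s * (e * v) := by rw [hev]
      _ = w * s * e * v := by rw [mul_assoc (w * s) e v]
      _ = e := hmv
  obtain ⟨p, hp⟩ : ∃ p : R, p = u * w := ⟨_, rfl⟩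
  have hpe : p * e = 0 := by rw [hp, mul_assoc, hwe, mul_zero]
  have hwp : w * p = w := by rw [hp, ← mul_assoc, hwu, hew]
  have hpp : p * p = p := by
    calc p * p = u * (w * u * w) := by
          rw [hp, mul_assoc u w (u * w), ← mul_assoc w u w]
      _ = p := by rw [hwu, hew, hp]
  obtain ⟨q, hqdef⟩ : ∃ q : R, q = p - e * p := ⟨_, rfl⟩
  have hq : q * q = q := by
    have e1 : p * (e * p) = 0 := by rw [← mul_assoc, hpe, zero_mul]
    have e2 : (e * p) * p = e * p := by rw [mul_assoc, hpp]
    have e3 : (e * p) * (e * p) = 0 := by rw [mul_assoc e p (e * p), e1, mul_zero]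
    rw [hqdef, sub_mul, mul_sub, mul_sub, hpp, e1, e2, e3, sub_zero, sub_zero]
  have heq : e * q = 0 := by rw [hqdef, mul_sub, ← mul_assoc, he, sub_self]
  have hqe : q * e = 0 := by
    rw [hqdef, sub_mul, hpe, mul_assoc, hpe, mul_zero, sub_zero]
  have hqne : q ≠ 0 := by
    intro h0
    have : w * q = w := by
      rw [hqdef, mul_sub, hwp, ← mul_assoc, hwe, zero_mul, sub_zero]
    rw [h0, mul_zero] at this
    exact hr this.symm
  refine ⟨q, hq, hqne, heq, hqe, ?_⟩
  have hp1 : p = (s * (e * t)) * e * w := by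
    rw [hp, hu, hvt]; noncomm_ring
  rw [hqdef, hp1]
  have hp2 : e * (s * (e * t) * e * w) = (e * (s * (e * t))) * e * w := by noncomm_ring
  rw [hp2]
  exact memRaR_sub_aux (memRaR_single_aux _ _ _) (memRaR_single_aux _ _ _)

/-- From a nonzero `z` with `e * z = 0`, build a nonzero idempotent `q ∈ ReR`
orthogonal to `e`. -/
private lemma build_q_right_aux
    (hprime : ∀ a b : R, (∀ r : R, a * r * b = 0) → a = 0 ∨ b = 0)
    {e : R} (he : e * e = e) (hene : e ≠ 0)
    (hdiv : ∀ x : R, (∃ r : R, x = e * r * e) → x ≠ 0 →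
      ∃ y : R, (∃ r : R, y = e * r * e) ∧ x * y = e ∧ y * x = e)
    {z : R} (hz : z ≠ 0) (hez : e * z = 0) :
    ∃ q : R, q * q = q ∧ q ≠ 0 ∧ e * q = 0 ∧ q * e = 0 ∧ MemRaR e q := by
  have hex : ∃ r, z * r * e ≠ 0 := by
    by_contra hc
    push_neg at hc
    rcases hprime z e hc with h | h
    · exact hz h
    · exact hene h
  obtain ⟨r, hr⟩ := hex
  obtain ⟨w, hw⟩ : ∃ w : R, w = z * r * e := ⟨_, rfl⟩
  rw [← hw] at hr
  have hwe : w * e = w := by rw [hw, mul_assoc (z * r) e e, he]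
  have hew : e * w = 0 := by
    rw [hw, ← mul_assoc, ← mul_assoc, hez, zero_mul, zero_mul]
  have hex2 : ∃ s, e * s * w ≠ 0 := by
    by_contra hc
    push_neg at hc
    rcases hprime e w hc with h | h
    · exact hene h
    · exact hr h
  obtain ⟨s, hs⟩ := hex2
  have hmform : e * (s * w) * e = e * s * w := by
    rw [← mul_assoc e s w, mul_assoc (e * s) w e, hwe]
  obtain ⟨v, ⟨t, hvt⟩, hmv, hvm⟩ := hdiv (e * s * w) ⟨s * w, hmform.symm⟩ hs
  have hve : v * e = v := by rw [hvt, mul_assoc (e * t) e e, he]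
  have hev : e * v = v := by rw [hvt, ← mul_assoc, ← mul_assoc, he]
  obtain ⟨u, hu⟩ : ∃ u : R, u = v * s := ⟨_, rfl⟩
  have heu : e * u = u := by rw [hu, ← mul_assoc, hev]
  have huw : u * w = e := by
    calc u * w = v * (s * w) := by rw [hu, mul_assoc]
      _ = (v * e) * (s * w) := by rw [hve]
      _ = v * (e * (s * w)) := by rw [mul_assoc]
      _ = v * (e * s * w) := by rw [mul_assoc e s w]
      _ = e := hvm
  obtain ⟨p, hp⟩ : ∃ p : R, p = w * u := ⟨_, rfl⟩
  have hep : e * p = 0 := by rw [hp, ← mul_assoc, hew, zero_mul]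
  have hpw : p * w = w := by rw [hp, mul_assoc, huw, hwe]
  have hpp : p * p = p := by
    calc p * p = w * (u * w * u) := by
          rw [hp, mul_assoc w u (w * u), ← mul_assoc u w u]
      _ = p := by rw [huw, heu, hp]
  obtain ⟨q, hqdef⟩ : ∃ q : R, q = p - p * e := ⟨_, rfl⟩
  have e1 : p * (p * e) = p * e := by rw [← mul_assoc, hpp]
  have e2 : (p * e) * p = 0 := by rw [mul_assoc, hep, mul_zero]
  have e3 : (p * e) * (p * e) = 0 := by rw [← mul_assoc (p * e) p e, e2, zero_mul]
  have hq : q * q = q := by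
    rw [hqdef, sub_mul, mul_sub, mul_sub, hpp, e1, e2, e3, sub_zero, sub_zero]
  have hqe : q * e = 0 := by rw [hqdef, sub_mul, mul_assoc, he, sub_self]
  have heq : e * q = 0 := by
    rw [hqdef, mul_sub, hep, ← mul_assoc, hep, zero_mul, zero_sub, neg_zero]
  have hqne : q ≠ 0 := by
    intro h0
    have : q * w = w := by
      rw [hqdef, sub_mul, hpw, mul_assoc, hew, mul_zero, sub_zero]
    rw [h0, zero_mul] at this
    exact hr this.symm
  refine ⟨q, hq, hqne, heq, hqe, ?_⟩
  have hp1 : p = (w * (e * t)) * e * s := by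
    rw [hp, hu, hvt]; noncomm_ring
  rw [hqdef, hp1]
  have hp2 : (w * (e * t)) * e * s * e = (w * (e * t)) * e * (s * e) := by noncomm_ring
  rw [hp2]
  exact memRaR_sub_aux (memRaR_single_aux _ _ _) (memRaR_single_aux _ _ _)

/-- If `e` is a two-sided identity of `R` and the corner `eRe = R` is a division ring,
then the quotient of `R` by the zero ideal is a division ring. -/
private lemma quotient_div_aux {e : R} (hene : e ≠ 0)
    (hid : ∀ x : R, e * x = x ∧ x * e = x)
    (hdiv : ∀ x : R, (∃ r : R, x = e * r * e) → x ≠ 0 →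
      ∃ y : R, (∃ r : R, y = e * r * e) ∧ x * y = e ∧ y * x = e) :
    IsDivisionRingPred (⊥ : TwoSidedIdeal R).ringCon.Quotient := by
  set c := (⊥ : TwoSidedIdeal R).ringCon with hc
  have hinj : ∀ x y : R, (x : c.Quotient) = y → x = y := by
    intro x y h
    rw [RingCon.eq, hc, TwoSidedIdeal.rel_iff, TwoSidedIdeal.mem_bot] at h
    exact sub_eq_zero.mp h
  refine ⟨(e : c.Quotient), ?_, ?_, ?_⟩
  · intro h
    exact hene (hinj e 0 (by rw [h, RingCon.coe_zero]))
  · intro X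
    induction X using Quotient.inductionOn' with
    | h x =>
      have hx : (Quotient.mk'' x : c.Quotient) = (x : c.Quotient) := rfl
      rw [hx]
      constructor
      · rw [← RingCon.coe_mul, (hid x).1]
      · rw [← RingCon.coe_mul, (hid x).2]
  · intro X hX
    induction X using Quotient.inductionOn' with
    | h x =>
      have hx : (Quotient.mk'' x : c.Quotient) = (x : c.Quotient) := rfl
      rw [hx] at hX ⊢
      have hxne : x ≠ 0 := fun h => hX (by rw [h, RingCon.coe_zero])
      obtain ⟨y, -, h1, h2⟩ := hdiv x ⟨x, by rw [(hid x).1, (hid x).2]⟩ hxne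
      exact ⟨(y : c.Quotient), by rw [← RingCon.coe_mul, h1], by rw [← RingCon.coe_mul, h2]⟩

end AuxPrimePiNoDivCorners

/-- Lemma 5.1 (PrimePiNoDivCorners): let `R` be a purely infinite prime ring. Then no corner
of `R` is a division ring: there is no nonzero idempotent `e` such that every nonzero element
of `eRe` is two-sidedly invertible in `eRe` with respect to the identity `e`. -/
theorem no_corner_is_division_ring {R : Type*} [NonUnitalRing R]
    (hprime : ∀ a b : R, (∀ r : R, a * r * b = 0) → a = 0 ∨ b = 0)
    (hpi : IsPurelyInfiniteRing R) :
    ¬ ∃ e : R, IsIdempotentElem e ∧ e ≠ 0 ∧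
        ∀ x : R, (∃ r : R, x = e * r * e) → x ≠ 0 →
          ∃ y : R, (∃ r : R, y = e * r * e) ∧ x * y = e ∧ y * x = e := by
  rintro ⟨e, heIdem, hene, hdiv⟩
  have he : e * e = e := heIdem
  by_cases hall : ∀ x : R, e * x = x ∧ x * e = x
  · exact hpi.1 ⊥ (quotient_div_aux hene hall hdiv)
  · obtain ⟨x, hx⟩ := not_forall.mp hall
    have hQ : ∃ q : R, q * q = q ∧ q ≠ 0 ∧ e * q = 0 ∧ q * e = 0 ∧ MemRaR e q := by
      by_cases hxe : x * e = x
      · have hex : e * x ≠ x := fun h => hx ⟨h, hxe⟩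
        have hz : x - e * x ≠ 0 := sub_ne_zero.mpr fun h => hex h.symm
        have hez : e * (x - e * x) = 0 := by
          rw [mul_sub, ← mul_assoc, he, sub_self]
        exact build_q_right_aux hprime he hene hdiv hz hez
      · have hz : x - x * e ≠ 0 := sub_ne_zero.mpr fun h => hxe h.symm
        have hze : (x - x * e) * e = 0 := by
          rw [sub_mul, mul_assoc, he, sub_self]
        exact build_q_left_aux hprime he hene hdiv hz hze
    obtain ⟨q, hq, hqne, heq, hqe, hqmem⟩ := hQ
    have hee : MemRaR e e := by
      have := memRaR_single_aux e e e
      rwa [he, he] at this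
    obtain ⟨X, Y, hXY⟩ := hpi.2 e (e + q) (memRaR_add_aux hee hqmem)
    exact rank_contradiction_aux he hene hdiv hq hqne heq hqe hXY
end

section
/- Let e be an idempotent in a ring R. If R is purely infinite then the corner eRe is purely infinite, and if R is properly purely infinite then eRe is properly purely infinite. -/
/-- For an idempotent `e` in a ring `R`, the corner `eRe` viewed as a nonunital subring;
it consists of those `x` with `e * x = x = x * e`, which for idempotent `e` coincides
with `{ e * r * e : r ∈ R }`. -/
def cornerSubring {R : Type*} [NonUnitalRing R] (e : R) : NonUnitalSubring R where
  carrier := { x : R | e * x = x ∧ x * e = x }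
  zero_mem' := by simp
  add_mem' := by
    rintro a b ⟨ha1, ha2⟩ ⟨hb1, hb2⟩
    exact ⟨by rw [mul_add, ha1, hb1], by rw [add_mul, ha2, hb2]⟩
  neg_mem' := by
    rintro a ⟨ha1, ha2⟩
    exact ⟨by rw [mul_neg, ha1], by rw [neg_mul, ha2]⟩
  mul_mem' := by
    rintro a b ⟨ha1, ha2⟩ ⟨hb1, hb2⟩
    exact ⟨by rw [← mul_assoc, ha1], by rw [mul_assoc, hb2]⟩

/-!
Conditions (ii) and proper infiniteness pass to `eRe` by compressing witnesses: for `a, b ∈ eRe`,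
`b = x a y` in `R` gives `b = (exe) a (eye)`, and likewise for matrices.

For condition (i), suppose `eRe / J` is a division ring and let `P` be the largest ideal of `R` with
`ePe ⊆ J`. In `A = R / P` the image of `e` is a nonzero idempotent whose corner is a division ring,
every nonzero `x ∈ A` has `e s x t e ≠ 0` for some `s, t`, and `A` inherits condition (ii). Then `e`
is the identity of `A`: a nonzero `x` with `e x = 0` (or `x e = 0`) satisfies `e ≼ x`, which
produces `a ∈ eA(1-e)` and `b ∈ (1-e)Ae` with `a b = e`. The idempotent `q = b a` is orthogonal to
`e`, and condition (ii) gives `e + q = c e d`; compressing by `e`, the division ring `eAe` is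
directly finite, which forces `q = 0` and then `e = a q b = 0`. So `A = eAe` is a division ring,
contradicting condition (i) for `R`.
-/

lemma IsDivisionRingPred.exists_inv {Q : Type*} [NonUnitalRing Q] (h : IsDivisionRingPred Q)
    {ε : Q} (hε : ∀ x, ε * x = x ∧ x * ε = x) :
    ε ≠ 0 ∧ ∀ x, x ≠ 0 → ∃ y, x * y = ε ∧ y * x = ε := by
  obtain ⟨u, hu0, hu, hinv⟩ := h
  obtain rfl : u = ε := (hε u).2.symm.trans (hu ε).1
  exact ⟨hu0, hinv⟩

section Transfer

variable {R S F : Type*} [NonUnitalRing R] [NonUnitalRing S] [FunLike F R S]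
  [NonUnitalRingHomClass F R S]

lemma MemRaR.map (f : F) {a b : R} (h : MemRaR a b) : MemRaR (f a) (f b) := by
  obtain ⟨n, x, y, rfl⟩ := h
  exact ⟨n, f ∘ x, f ∘ y, by simp [map_sum]⟩

lemma elemSub_of_memRaR_of_surjective {f : F} (hf : Function.Surjective f)
    (h : ∀ a b : R, MemRaR a b → ElemSub b a) (a b : S) (hab : MemRaR a b) : ElemSub b a := by
  obtain ⟨n, x, y, rfl⟩ := hab
  obtain ⟨a, rfl⟩ := hf a
  choose x' hx' using fun i => hf (x i)
  choose y' hy' using fun i => hf (y i)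
  obtain ⟨α, β, hαβ⟩ := h a _ ⟨n, x', y', rfl⟩
  refine ⟨f α, f β, ?_⟩
  rw [← map_mul, ← map_mul, ← hαβ, map_sum]
  simp only [map_mul, hx', hy']

end Transfer

def RingCon.mkNonUnital {R : Type*} [NonUnitalRing R] (c : RingCon R) : R →ₙ+* c.Quotient where
  toFun := (↑)
  map_mul' := c.coe_mul
  map_zero' := c.coe_zero
  map_add' := c.coe_add

lemma RingCon.mkNonUnital_surjective {R : Type*} [NonUnitalRing R] (c : RingCon R) :
    Function.Surjective c.mkNonUnital :=
  Quot.mk_surjective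

lemma TwoSidedIdeal.mkNonUnital_eq_zero_iff {R : Type*} [NonUnitalRing R] (I : TwoSidedIdeal R)
    (x : R) : I.ringCon.mkNonUnital x = 0 ↔ x ∈ I := by
  rw [← map_zero I.ringCon.mkNonUnital]
  exact (RingCon.eq _).trans (I.mem_iff x).symm

section CornerInclusion

variable {R : Type*} [NonUnitalRing R] {e : R}

lemma mul_mul_mem_cornerSubring (he : IsIdempotentElem e) (r : R) :
    e * r * e ∈ cornerSubring e :=
  ⟨by rw [← mul_assoc, ← mul_assoc, he.eq], by rw [mul_assoc, he.eq]⟩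

lemma mul_sandwich_of_mem_cornerSubring {b : R} (hb : b ∈ cornerSubring e)
    (α β : R) : e * (α * b * β) * e = e * α * e * b * (e * β * e) := by
  conv_lhs => rw [← hb.1, ← hb.2]
  simp only [mul_assoc]

lemma ElemSub.of_coe_cornerSubring (he : IsIdempotentElem e) {a b : cornerSubring e}
    (h : ElemSub (a : R) b) : ElemSub a b := by
  obtain ⟨α, β, hαβ⟩ := h
  refine ⟨⟨_, mul_mul_mem_cornerSubring he α⟩, ⟨_, mul_mul_mem_cornerSubring he β⟩,
    Subtype.ext ?_⟩
  calc (a : R) = e * (α * b * β) * e := by rw [← hαβ, a.2.1, a.2.2]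
    _ = _ := mul_sandwich_of_mem_cornerSubring b.2 α β

lemma MatSub.of_map_cornerSubring (he : IsIdempotentElem e) {k n : ℕ}
    {x : Matrix (Fin k) (Fin k) (cornerSubring e)} {y : Matrix (Fin n) (Fin n) (cornerSubring e)}
    (h : MatSub (x.map Subtype.val) (y.map Subtype.val)) : MatSub x y := by
  obtain ⟨α, β, hαβ⟩ := h
  let compress {p q : ℕ} (γ : Matrix (Fin p) (Fin q) R) :
      Matrix (Fin p) (Fin q) (cornerSubring e) :=
    γ.map fun r => ⟨e * r * e, mul_mul_mem_cornerSubring he r⟩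
  refine ⟨compress α, compress β, Matrix.map_injective Subtype.val_injective ?_⟩
  let D (p : ℕ) : Matrix (Fin p) (Fin p) R := Matrix.diagonal fun _ => e
  have hcompress {p q : ℕ} (γ : Matrix (Fin p) (Fin q) R) :
      (compress γ).map Subtype.val = D p * γ * D q := by
    ext i j
    simp [compress, D]
  have hD {p : ℕ} (z : Matrix (Fin p) (Fin p) (cornerSubring e)) :
      D p * z.map Subtype.val * D p = z.map Subtype.val := by
    ext i j
    simp [D, (z i j).2.1, (z i j).2.2]
  calc x.map Subtype.val = D k * (α * y.map Subtype.val * β) * D k := by rw [← hαβ, hD]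
    _ = (D k * α * D n) * y.map Subtype.val * (D n * β * D k) := by
        conv_lhs => rw [← hD y]
        simp only [Matrix.mul_assoc]
    _ = (compress α * y * compress β).map Subtype.val := by
        rw [← hcompress, ← hcompress]
        change _ = (compress α * y * compress β).map (NonUnitalSubringClass.subtype _)
        rw [Matrix.map_mul, Matrix.map_mul]
        rfl

lemma PairSub.of_coe_cornerSubring (he : IsIdempotentElem e) {a b c : cornerSubring e}
    (h : PairSub (a : R) b c) : PairSub a b c := by
  refine MatSub.of_map_cornerSubring he ?_
  unfold PairSub at h
  convert h using 2 <;> ext i j <;> fin_cases i <;> fin_cases j <;> rfl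

end CornerInclusion

def IsDivisionCorner {A : Type*} [NonUnitalRing A] (e : A) : Prop :=
  ∀ a ∈ cornerSubring e, a ≠ 0 → ∃ w ∈ cornerSubring e, a * w = e ∧ w * a = e

section DivisionCorner

variable {A : Type*} [NonUnitalRing A] {e : A}

namespace IsDivisionCorner

variable (hD : IsDivisionCorner e)
include hD

lemma mul_eq_of_mul_eq {g h : A} (hg : g ∈ cornerSubring e) (hh : h ∈ cornerSubring e)
    (hgh : g * h = e) : h * g = e := by
  by_cases hg0 : g = 0
  · have he0 : e = 0 := by rw [← hgh, hg0, zero_mul]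
    rw [hg0, mul_zero, he0]
  obtain ⟨w, hw, -, hwg⟩ := hD g hg hg0
  have hwh : w = h := by
    calc w = w * (g * h) := by rw [hgh, hw.2]
      _ = h := by rw [← mul_assoc, hwg, hh.1]
  rw [← hwh, hwg]

lemma eq_zero_of_add_eq_mul_mul (he : IsIdempotentElem e) {q c d : A}
    (hq : IsIdempotentElem q) (heq : e * q = 0) (hqe : q * e = 0) (hcd : e + q = c * e * d) :
    q = 0 := by
  have hG := mul_mul_mem_cornerSubring he c
  have hH := mul_mul_mem_cornerSubring he d
  have hGH : (e * c * e) * (e * d * e) = e := by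
    calc (e * c * e) * (e * d * e) = e * (c * e * d) * e := by
          simp only [mul_assoc, he.mul_self_mul]
      _ = e := by rw [← hcd, mul_add, add_mul, heq, zero_mul, add_zero, he.eq, he.eq]
  have hHG := hD.mul_eq_of_mul_eq hG hH hGH
  have hGdq : (e * c * e) * (e * d * q) = 0 := by
    calc (e * c * e) * (e * d * q) = e * (c * e * d) * q := by
          simp only [mul_assoc, he.mul_self_mul]
      _ = 0 := by rw [← hcd, mul_add, heq, he.eq, add_zero, heq]
  have hdq : e * d * q = 0 := by
    calc e * d * q = (e * d * e) * (e * c * e) * (e * d * q) := by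
          rw [hHG, ← mul_assoc, ← mul_assoc, he.eq]
      _ = 0 := by rw [mul_assoc, hGdq, mul_zero]
  calc q = q * (e + q) * q := by rw [mul_add, add_mul, hqe, zero_mul, zero_add, hq.eq, hq.eq]
    _ = (q * c * e) * (e * d * q) := by rw [hcd]; simp only [mul_assoc, he.mul_self_mul]
    _ = 0 := by rw [hdq, mul_zero]

lemma eq_zero_of_mul_eq_of_orthogonal (he : IsIdempotentElem e)
    (hRaR : ∀ x y : A, MemRaR x y → ElemSub y x) {a b : A}
    (hab : a * b = e) (hae : a * e = 0) (heb : e * b = 0) (hbe : b * e = b) : e = 0 := by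
  have hbea : b * e * a = b * a := by rw [hbe]
  have hq : IsIdempotentElem (b * a) := by
    rw [IsIdempotentElem, mul_assoc, ← mul_assoc a, hab, ← mul_assoc, hbea]
  have hRaRq : MemRaR e (e + b * a) :=
    ⟨2, ![e, b], ![e, a], by simp [Fin.sum_univ_two, he.eq, hbea]⟩
  obtain ⟨c, d, hcd⟩ := hRaR e _ hRaRq
  have hq0 : b * a = 0 :=
    hD.eq_zero_of_add_eq_mul_mul he hq (by rw [← mul_assoc, heb, zero_mul])
      (by rw [mul_assoc, hae, mul_zero]) hcd
  calc e = a * (b * a) * b := by rw [← mul_assoc, hab, mul_assoc, hab, he.eq]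
    _ = 0 := by rw [hq0, mul_zero, zero_mul]

lemma elemSub_of_ne_zero (he : IsIdempotentElem e)
    (hfull : ∀ x : A, x ≠ 0 → ∃ s t : A, e * s * x * t * e ≠ 0) {x : A} (hx : x ≠ 0) :
    ElemSub e x := by
  obtain ⟨s, t, hk⟩ := hfull x hx
  have hk' : e * (s * x * t) * e ≠ 0 := by simpa only [mul_assoc] using hk
  obtain ⟨w, hw, -, hwk⟩ := hD _ (mul_mul_mem_cornerSubring he _) hk'
  exact ⟨w * e * s, t * e, hwk.symm.trans (by simp only [mul_assoc])⟩

variable (he : IsIdempotentElem e) (he0 : e ≠ 0) (hRaR : ∀ x y : A, MemRaR x y → ElemSub y x)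
  (hsub : ∀ x : A, x ≠ 0 → ElemSub e x)
include he he0 hRaR hsub

lemma eq_zero_of_mul_eq_zero_left {x : A} (hex : e * x = 0) : x = 0 := by
  by_contra hx
  obtain ⟨u, v, huv⟩ := hsub x hx
  refine he0 (hD.eq_zero_of_mul_eq_of_orthogonal he hRaR (a := u - u * e) (b := x * v * e)
    ?_ ?_ ?_ ?_)
  · calc (u - u * e) * (x * v * e) = u * x * v * e - u * (e * x) * v * e := by noncomm_ring
      _ = e := by rw [← huv, hex, mul_zero, zero_mul, zero_mul, sub_zero, he.eq]
  · rw [sub_mul, he.mul_mul_self, sub_self]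
  · rw [← mul_assoc, ← mul_assoc, hex, zero_mul, zero_mul]
  · rw [he.mul_mul_self]

lemma eq_zero_of_mul_eq_zero_right {x : A} (hxe : x * e = 0) : x = 0 := by
  by_contra hx
  obtain ⟨u, v, huv⟩ := hsub x hx
  refine he0 (hD.eq_zero_of_mul_eq_of_orthogonal he hRaR (a := e * u * x)
    (b := v * e - e * v * e) ?_ ?_ ?_ ?_)
  · calc e * u * x * (v * e - e * v * e) = e * (u * x * v) * e - e * u * (x * e) * v * e := by
          noncomm_ring
      _ = e := by rw [← huv, hxe, mul_zero, zero_mul, zero_mul, sub_zero, he.eq, he.eq]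
  · rw [mul_assoc, hxe, mul_zero]
  · rw [mul_sub, ← mul_assoc, ← mul_assoc, ← mul_assoc, he.eq, sub_self]
  · rw [sub_mul, he.mul_mul_self, he.mul_mul_self]

end IsDivisionCorner

end DivisionCorner

theorem isDivisionRingPred_of_isDivisionCorner {A : Type*} [NonUnitalRing A] {e : A}
    (he : IsIdempotentElem e) (he0 : e ≠ 0) (hRaR : ∀ x y : A, MemRaR x y → ElemSub y x)
    (hD : IsDivisionCorner e)
    (hfull : ∀ x : A, x ≠ 0 → ∃ s t : A, e * s * x * t * e ≠ 0) :
    IsDivisionRingPred A := by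
  have hsub (x : A) (hx : x ≠ 0) : ElemSub e x := hD.elemSub_of_ne_zero he hfull hx
  have hunit (r : A) : e * r = r ∧ r * e = r := by
    constructor
    · refine (sub_eq_zero.1 (hD.eq_zero_of_mul_eq_zero_left he he0 hRaR hsub ?_)).symm
      rw [mul_sub, ← mul_assoc, he.eq, sub_self]
    · refine (sub_eq_zero.1 (hD.eq_zero_of_mul_eq_zero_right he he0 hRaR hsub ?_)).symm
      rw [sub_mul, mul_assoc, he.eq, sub_self]
  refine ⟨e, he0, hunit, fun r hr => ?_⟩
  obtain ⟨w, -, hrw, hwr⟩ := hD r (hunit r) hr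
  exact ⟨w, hrw, hwr⟩

section CornerIdeal

variable {R : Type*} [NonUnitalRing R] {e : R} (J : TwoSidedIdeal (cornerSubring e))

/-- The largest ideal `K` of `R` with `eKe ⊆ J`. -/
def liftCornerIdeal : TwoSidedIdeal R :=
  .mk' {r | ∀ s t : R, e * s * r * t * e ∈ Subtype.val '' (J : Set (cornerSubring e))}
    (fun _ _ => ⟨0, J.zero_mem, by simp⟩)
    (fun hx hy s t => by
      obtain ⟨c, hc, hcx⟩ := hx s t
      obtain ⟨d, hd, hdy⟩ := hy s t
      exact ⟨c + d, J.add_mem hc hd, by simp [hcx, hdy, mul_add, add_mul]⟩)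
    (fun hx s t => by
      obtain ⟨c, hc, hcx⟩ := hx s t
      exact ⟨-c, J.neg_mem hc, by simp [hcx]⟩)
    (fun {x _} hy s t => by simpa only [mul_assoc] using hy (s * x) t)
    (fun {_ y} hx s t => by simpa only [mul_assoc] using hx s (y * t))

lemma mem_liftCornerIdeal {r : R} :
    r ∈ liftCornerIdeal J ↔
      ∀ s t : R, e * s * r * t * e ∈ Subtype.val '' (J : Set (cornerSubring e)) :=
  TwoSidedIdeal.mem_mk' ..

variable {J} (he : IsIdempotentElem e)
include he

lemma coe_mem_liftCornerIdeal {c : cornerSubring e} :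
    (c : R) ∈ liftCornerIdeal J ↔ c ∈ J := by
  rw [mem_liftCornerIdeal]
  refine ⟨fun h => ?_, fun hc s t => ?_⟩
  · obtain ⟨d, hd, hdc⟩ := h e e
    have hcd : c = d := Subtype.ext <| by rw [hdc, he.eq, mul_assoc, he.eq, c.2.1, c.2.2]
    rwa [hcd]
  · let s' : cornerSubring e := ⟨_, mul_mul_mem_cornerSubring he s⟩
    let t' : cornerSubring e := ⟨_, mul_mul_mem_cornerSubring he t⟩
    refine ⟨s' * c * t', J.mul_mem_right _ _ (J.mul_mem_left _ _ hc), ?_⟩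
    change e * s * e * c * (e * t * e) = _
    rw [← mul_sandwich_of_mem_cornerSubring c.2]
    simp only [mul_assoc]

lemma exists_not_mem_liftCornerIdeal {x : R} (hx : x ∉ liftCornerIdeal J) :
    ∃ s t : R, e * s * x * t * e ∉ liftCornerIdeal J := by
  obtain ⟨s, t, hst⟩ :
      ∃ s t : R, e * s * x * t * e ∉ Subtype.val '' (J : Set (cornerSubring e)) := by
    simpa only [mem_liftCornerIdeal, not_forall] using hx
  have hmem : e * s * x * t * e ∈ cornerSubring e := by
    simpa only [mul_assoc] using mul_mul_mem_cornerSubring he (s * x * t)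
  exact ⟨s, t, fun h => hst ⟨⟨_, hmem⟩, (coe_mem_liftCornerIdeal he).1 h, rfl⟩⟩

lemma mkNonUnital_liftCornerIdeal_eq {c d : cornerSubring e}
    (h : J.ringCon.mkNonUnital c = J.ringCon.mkNonUnital d) :
    (liftCornerIdeal J).ringCon.mkNonUnital (c : R) =
      (liftCornerIdeal J).ringCon.mkNonUnital d := by
  rw [← sub_eq_zero, ← map_sub, TwoSidedIdeal.mkNonUnital_eq_zero_iff] at h ⊢
  exact (coe_mem_liftCornerIdeal he (c := c - d)).2 h

lemma mkNonUnital_cornerSubring_mul (x : J.ringCon.Quotient) :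
    J.ringCon.mkNonUnital ⟨e, he, he⟩ * x = x ∧
      x * J.ringCon.mkNonUnital ⟨e, he, he⟩ = x := by
  obtain ⟨x, rfl⟩ := RingCon.mkNonUnital_surjective _ x
  rw [← map_mul, ← map_mul]
  exact ⟨congrArg _ (Subtype.ext x.2.1), congrArg _ (Subtype.ext x.2.2)⟩

lemma isDivisionCorner_quotient_liftCornerIdeal (hJ : IsDivisionRingPred J.ringCon.Quotient) :
    IsDivisionCorner ((liftCornerIdeal J).ringCon.mkNonUnital e) := by
  set π := (liftCornerIdeal J).ringCon.mkNonUnital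
  set ρ := J.ringCon.mkNonUnital
  obtain ⟨-, hinv⟩ := hJ.exists_inv (mkNonUnital_cornerSubring_mul he)
  intro a ha ha0
  obtain ⟨a, rfl⟩ := RingCon.mkNonUnital_surjective _ a
  set c : cornerSubring e := ⟨_, mul_mul_mem_cornerSubring he a⟩
  have hca : π c = π a := by
    change π (e * a * e) = _
    rw [map_mul, map_mul, ha.1, ha.2]
  have hc0 : ρ c ≠ 0 := by
    rwa [Ne, TwoSidedIdeal.mkNonUnital_eq_zero_iff, ← coe_mem_liftCornerIdeal he,
      ← TwoSidedIdeal.mkNonUnital_eq_zero_iff, hca]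
  obtain ⟨y, hcy, hyc⟩ := hinv _ hc0
  obtain ⟨w, rfl⟩ := RingCon.mkNonUnital_surjective _ y
  refine ⟨π w, ⟨by rw [← map_mul, w.2.1], by rw [← map_mul, w.2.2]⟩, ?_, ?_⟩
  · rw [← hca, ← map_mul]
    exact mkNonUnital_liftCornerIdeal_eq he (c := c * w) (d := ⟨e, he, he⟩)
      (by rw [map_mul, hcy])
  · rw [← hca, ← map_mul]
    exact mkNonUnital_liftCornerIdeal_eq he (c := w * c) (d := ⟨e, he, he⟩)
      (by rw [map_mul, hyc])

end CornerIdeal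

lemma not_isDivisionRingPred_quotient_cornerSubring {R : Type*} [NonUnitalRing R] {e : R}
    (he : IsIdempotentElem e) (hPI : IsPurelyInfiniteRing R)
    (J : TwoSidedIdeal (cornerSubring e)) : ¬ IsDivisionRingPred J.ringCon.Quotient := by
  intro hJ
  set π := (liftCornerIdeal J).ringCon.mkNonUnital
  have he0 : π e ≠ 0 := by
    rw [Ne, TwoSidedIdeal.mkNonUnital_eq_zero_iff,
      coe_mem_liftCornerIdeal he (c := ⟨e, he, he⟩), ← TwoSidedIdeal.mkNonUnital_eq_zero_iff]
    exact (hJ.exists_inv (mkNonUnital_cornerSubring_mul he)).1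
  have hfull (x) (hx : x ≠ 0) : ∃ s t, π e * s * x * t * π e ≠ 0 := by
    obtain ⟨x, rfl⟩ := RingCon.mkNonUnital_surjective _ x
    rw [Ne, TwoSidedIdeal.mkNonUnital_eq_zero_iff] at hx
    obtain ⟨s, t, hst⟩ := exists_not_mem_liftCornerIdeal he hx
    refine ⟨π s, π t, ?_⟩
    rwa [Ne, ← map_mul, ← map_mul, ← map_mul, ← map_mul,
      TwoSidedIdeal.mkNonUnital_eq_zero_iff]
  exact hPI.1 _ <| isDivisionRingPred_of_isDivisionCorner (he.map π) he0
    (elemSub_of_memRaR_of_surjective (RingCon.mkNonUnital_surjective _) hPI.2)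
    (isDivisionCorner_quotient_liftCornerIdeal he hJ) hfull

/-- Proposition 5.2 (PiCorners): let `e` be an idempotent in a ring `R`. If `R` is purely
infinite, then so is the corner `eRe`, and if `R` is properly purely infinite, then so
is `eRe`. -/
theorem corner_purelyInfinite {R : Type*} [NonUnitalRing R]
    (e : R) (he : IsIdempotentElem e) :
    (IsPurelyInfiniteRing R → IsPurelyInfiniteRing (cornerSubring e)) ∧
    (IsProperlyPurelyInfiniteRing R → IsProperlyPurelyInfiniteRing (cornerSubring e)) := by
  refine ⟨fun hPI => ⟨not_isDivisionRingPred_quotient_cornerSubring he hPI,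
    fun a b hab => ?_⟩, fun hPPI a ha => ⟨ha, ?_⟩⟩
  · exact (hPI.2 _ _ (hab.map (NonUnitalSubringClass.subtype _))).of_coe_cornerSubring he
  · exact (hPPI a (by simpa using ha)).2.of_coe_cornerSubring he
end
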